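/- arXiv:2605.07563 — 7 statements merged into one kernel-verified Lean document; each statement's English description precedes it below -/
import Mathlib

section
/- Let n ∈ ℕ with n ≥ 7 and let δ_1, ..., δ_{2^n} ∈ [-1,1] satisfy δ_1 + δ_2 + ⋯ + δ_{2^n} ≤ 1. Then there exists an interval I_n of consecutive natural numbers such that I_n ⊆ {1, ..., 2^n}, |I_n| ≥ n, and max over k with min(I_n) ≤ k ≤ max(I_n) of the partial sum ∑_{j=k}^{max(I_n)} δ_j is at most 1. -/
lemma sq_add_le_pow (n : ℕ) (hn : 7 ≤ n) : n * n + n ≤ 2 ^ n := by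
  induction n, hn using Nat.le_induction with
  | base => norm_num
  | succ n hn ih =>
    have : (n + 1) * (n + 1) + (n + 1) ≤ 2 * (n * n + n) := by nlinarith
    calc (n + 1) * (n + 1) + (n + 1) ≤ 2 * (n * n + n) := this
      _ ≤ 2 * 2 ^ n := by omega
      _ = 2 ^ (n + 1) := by ring

/-- Sublemma 2.3. Let `n ≥ 7` and let `δ_1, …, δ_{2^n} ∈ [-1, 1]`
satisfy `δ_1 + ⋯ + δ_{2^n} ≤ 1`. Then there is an interval `I_n = [a, b] ∩ ℕ`
contained in `{1, …, 2^n}`, of cardinality at least `n`, such that every tail partial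
sum `∑_{j=k}^{b} δ_j` (for `a ≤ k ≤ b`) is at most `1`. -/
theorem exists_interval_tail_sums_le_one (n : ℕ) (hn : 7 ≤ n) (δ : ℕ → ℝ)
    (hδ : ∀ j : ℕ, 1 ≤ j → j ≤ 2 ^ n → δ j ∈ Set.Icc (-1 : ℝ) 1)
    (hsum : ∑ j ∈ Finset.Icc 1 (2 ^ n), δ j ≤ 1) :
    ∃ a b : ℕ, 1 ≤ a ∧ a ≤ b ∧ b ≤ 2 ^ n ∧ n ≤ b - a + 1 ∧
      ∀ k : ℕ, a ≤ k → k ≤ b → ∑ j ∈ Finset.Icc k b, δ j ≤ 1 := by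
  by_contra hcon
  push_neg at hcon
  set S : ℕ → ℝ := fun m => ∑ j ∈ Finset.Ioc 0 m, δ j with hSdef
  have hIcc : ∀ m : ℕ, Finset.Icc 1 m = Finset.Ioc 0 m := by
    intro m; ext x; simp [Nat.lt_iff_add_one_le]
  have hpow : n * n + n ≤ 2 ^ n := sq_add_le_pow n hn
  -- lower bound on prefix sums
  have hSlow : ∀ m : ℕ, m ≤ 2 ^ n → -(m : ℝ) ≤ S m := by
    intro m hm
    have : ∑ j ∈ Finset.Ioc 0 m, (-1 : ℝ) ≤ S m := by
      apply Finset.sum_le_sum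
      intro j hj
      simp only [Finset.mem_Ioc] at hj
      exact (hδ j hj.1 (le_trans hj.2 hm)).1
    simpa using this
  have hStop : S (2 ^ n) ≤ 1 := by
    have : S (2 ^ n) = ∑ j ∈ Finset.Icc 1 (2 ^ n), δ j := by rw [hIcc]
    rw [this]; exact hsum
  -- splitting of sums
  have hsplit : ∀ k m : ℕ, 1 ≤ k → k ≤ m →
      ∑ j ∈ Finset.Icc k m, δ j = S m - S (k - 1) := by
    intro k m hk hkm
    have h1 : Finset.Icc k m = Finset.Ioc (k - 1) m := by
      ext x; simp only [Finset.mem_Icc, Finset.mem_Ioc]; omega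
    have h2 : S (k - 1) + ∑ j ∈ Finset.Ioc (k - 1) m, δ j = S m := by
      rw [hSdef]
      exact Finset.sum_Ioc_consecutive δ (by omega) (by omega)
    rw [h1]; linarith
  -- key chain claim
  have key : ∀ i : ℕ, ∃ m : ℕ, m ≤ 2 ^ n ∧ 2 ^ n ≤ m + i * n ∧ n ≤ m ∧
      S m ≤ 1 - (i : ℝ) := by
    intro i
    induction i with
    | zero =>
      exact ⟨2 ^ n, le_refl _, by omega, by
        calc n ≤ n * n + n := by omega
          _ ≤ 2 ^ n := hpow, by simpa using hStop⟩
    | succ i ih =>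
      obtain ⟨m, hm1, hm2, hm3, hm4⟩ := ih
      obtain ⟨k, hk1, hk2, hk3⟩ := hcon (m - n + 1) m (by omega) (by omega) hm1 (by omega)
      have hk0 : 1 ≤ k := by omega
      have hks := hsplit k m hk0 hk2
      set m' := k - 1 with hm'def
      have hSm' : S m' < -(i : ℝ) := by
        have : S m - S m' > 1 := by rw [← hks]; exact hk3
        linarith
      have hm'1 : m' ≤ 2 ^ n := by omega
      have hm'2 : 2 ^ n ≤ m' + (i + 1) * n := by
        have : m - n ≤ m' := by omega
        calc 2 ^ n ≤ m + i * n := hm2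
          _ ≤ m' + n + i * n := by omega
          _ = m' + (i + 1) * n := by ring
      refine ⟨m', hm'1, hm'2, ?_, by push_cast; linarith⟩
      by_contra hlt
      push_neg at hlt
      -- m' < n ; then i < m' from real bounds
      have hlow := hSlow m' hm'1
      have him' : (i : ℝ) < (m' : ℝ) := by linarith
      have him : i < m' := by exact_mod_cast him'
      have hin : i + 1 ≤ n - 1 := by omega
      have hmul : (i + 1) * n ≤ (n - 1) * n := Nat.mul_le_mul_right n hin
      have h1 : (n - 1) * n = n * n - n := by rw [Nat.sub_mul, one_mul]
      have h2 : n ≤ n * n := Nat.le_mul_of_pos_left n (by omega)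
      omega
  -- conclude
  obtain ⟨m, hm1, _, _, hm4⟩ := key (2 ^ n + 2)
  have hlow := hSlow m hm1
  have hcast : (m : ℝ) ≤ (2 ^ n : ℕ) := by exact_mod_cast hm1
  have : ((2 ^ n + 2 : ℕ) : ℝ) = (2 ^ n : ℕ) + 2 := by push_cast; ring
  linarith
end

section
/- Let w = (ω_k)_{k≥1} be a bounded sequence of positive real numbers satisfying sup_{n≥1} inf_{k≥1} ∏_{j=1}^{n} ω_{k+j} ≤ 1. Then there exists β ≥ 1 such that for every N ∈ ℕ the set A^w_{N,β} := { k ∈ ℕ : max_{k < u ≤ k+N} ∏_{j=u}^{k+N} ω_j ≤ β } is infinite. -/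
/-- Lemma 2.4. Let `w = (ω_k)_{k ≥ 1}` be a bounded sequence of
positive reals with `sup_{n ≥ 1} inf_{k ≥ 1} ∏_{j=1}^n ω_{k+j} ≤ 1`. Then there is
`β ≥ 1` such that for every `N ≥ 1` the set
`A^w_{N,β} = {k ≥ 1 : max_{k < u ≤ k+N} ∏_{j=u}^{k+N} ω_j ≤ β}` is infinite. -/
theorem exists_beta_weightSet_infinite (w : ℕ → ℝ) (hwpos : ∀ k : ℕ, 1 ≤ k → 0 < w k)
    (hwbdd : ∃ C : ℝ, ∀ k : ℕ, 1 ≤ k → w k ≤ C)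
    (hsupinf : ∀ n : ℕ, 1 ≤ n → (⨅ k : ℕ, ∏ j ∈ Finset.Icc 1 n, w (k + 1 + j)) ≤ 1) :
    ∃ β : ℝ, 1 ≤ β ∧ ∀ N : ℕ, 1 ≤ N →
      {k : ℕ | 1 ≤ k ∧ ∀ u : ℕ, k < u → u ≤ k + N →
        ∏ j ∈ Finset.Icc u (k + N), w j ≤ β}.Infinite := by
  obtain ⟨C, hC⟩ := hwbdd
  set B : ℝ := max C 1 with hBdef
  have hB1 : (1:ℝ) ≤ B := le_max_right _ _
  have hBw : ∀ k, 1 ≤ k → w k ≤ B := fun k hk => (hC k hk).trans (le_max_left _ _)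
  set P : ℕ → ℝ := fun m => ∏ j ∈ Finset.Icc 1 m, w j with hPdef
  have hPpos : ∀ m, 0 < P m := fun m =>
    Finset.prod_pos fun j hj => hwpos j (Finset.mem_Icc.mp hj).1
  have hsplit : ∀ a b : ℕ, a ≤ b → P b = P a * ∏ j ∈ Finset.Ioc a b, w j := by
    intro a b hab
    have h0 : ∀ m : ℕ, Finset.Icc 1 m = Finset.Ioc 0 m := by
      intro m; ext x; simp only [Finset.mem_Icc, Finset.mem_Ioc]; omega
    simp only [hPdef, h0]
    exact (Finset.prod_Ioc_consecutive w (Nat.zero_le a) hab).symm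
  have hsuffix : ∀ u E : ℕ, 1 ≤ u → u ≤ E + 1 →
      P E = P (u - 1) * ∏ j ∈ Finset.Icc u E, w j := by
    intro u E hu huE
    have h1 : Finset.Icc u E = Finset.Ioc (u - 1) E := by
      ext x; simp only [Finset.mem_Icc, Finset.mem_Ioc]; omega
    rw [h1]
    exact hsplit (u - 1) E (by omega)
  have hshift : ∀ k n : ℕ, P (k + 1 + n) = P (k + 1) * ∏ j ∈ Finset.Icc 1 n, w (k + 1 + j) := by
    intro k n
    rw [hsplit (k + 1) (k + 1 + n) (by omega)]
    congr 1
    have h2 : Finset.Ioc (k + 1) (k + 1 + n)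
        = Finset.map (addLeftEmbedding (k + 1)) (Finset.Icc 1 n) := by
      rw [Finset.map_add_left_Icc]
      ext x; simp only [Finset.mem_Icc, Finset.mem_Ioc]; omega
    rw [h2, Finset.prod_map]
    simp [addLeftEmbedding_apply]
  refine ⟨2, one_le_two, ?_⟩
  intro N hN
  by_contra hfin
  rw [Set.not_infinite] at hfin
  obtain ⟨K0, hK0⟩ := hfin.bddAbove
  set K : ℕ := K0 + 1 with hKdef
  -- badness: every far enough E has a much smaller P-value within N steps back
  have hbad : ∀ E : ℕ, K + N ≤ E → ∃ j : ℕ, E - N ≤ j ∧ j ≤ E - 1 ∧ 2 * P j < P E := by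
    intro E hE
    have h1k : 1 ≤ E - N := by omega
    have hnot : ¬ (∀ u : ℕ, E - N < u → u ≤ E - N + N →
        ∏ j ∈ Finset.Icc u (E - N + N), w j ≤ (2:ℝ)) := by
      intro hall
      have hmem : (E - N) ∈ {k : ℕ | 1 ≤ k ∧ ∀ u : ℕ, k < u → u ≤ k + N →
          ∏ j ∈ Finset.Icc u (k + N), w j ≤ (2:ℝ)} := ⟨h1k, hall⟩
      have := hK0 hmem
      omega
    push_neg at hnot
    obtain ⟨u, hu1, hu2, hu3⟩ := hnot
    have hEN : E - N + N = E := by omega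
    rw [hEN] at hu2 hu3
    have heq := hsuffix u E (by omega) (by omega)
    have hpu : 0 < P (u - 1) := hPpos (u - 1)
    have h4 : P (u - 1) * 2 < P (u - 1) * (∏ j ∈ Finset.Icc u E, w j) :=
      mul_lt_mul_of_pos_left hu3 hpu
    exact ⟨u - 1, by omega, by omega, by linarith⟩
  -- the window minimum function
  have hwinne : ∀ E : ℕ, (Finset.Icc (E - N) (E - 1)).Nonempty :=
    fun E => ⟨E - 1, Finset.mem_Icc.mpr ⟨by omega, le_rfl⟩⟩
  set M : ℕ → ℝ := fun E => (Finset.Icc (E - N) (E - 1)).inf' (hwinne E) P with hMdef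
  have hMle : ∀ E j : ℕ, E - N ≤ j → j ≤ E - 1 → M E ≤ P j := by
    intro E j h1 h2
    simp only [hMdef]
    exact Finset.inf'_le P (Finset.mem_Icc.mpr ⟨h1, h2⟩)
  have hMge : ∀ (E : ℕ) (x : ℝ), (∀ j, E - N ≤ j → j ≤ E - 1 → x ≤ P j) → x ≤ M E := by
    intro E x h
    simp only [hMdef]
    exact (Finset.le_inf'_iff (hwinne E) P).mpr
      (fun j hj => h j (Finset.mem_Icc.mp hj).1 (Finset.mem_Icc.mp hj).2)
  have hMmem : ∀ E : ℕ, ∃ j : ℕ, E - N ≤ j ∧ j ≤ E - 1 ∧ M E = P j := by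
    intro E
    obtain ⟨j, hj, hje⟩ := Finset.exists_mem_eq_inf' (hwinne E) P
    refine ⟨j, (Finset.mem_Icc.mp hj).1, (Finset.mem_Icc.mp hj).2, ?_⟩
    simp only [hMdef]; exact hje
  have hMpos : ∀ E, 0 < M E := by
    intro E
    obtain ⟨j, _, _, hje⟩ := hMmem E
    rw [hje]; exact hPpos j
  have hPM : ∀ E : ℕ, K + N ≤ E → 2 * M E < P E := by
    intro E hE
    obtain ⟨j, h1, h2, h3⟩ := hbad E hE
    have := hMle E j h1 h2
    linarith
  have hMmono1 : ∀ E : ℕ, K + N ≤ E → M E ≤ M (E + 1) := by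
    intro E hE
    apply hMge
    intro j h1 h2
    by_cases hcase : j ≤ E - 1
    · exact hMle E j (by omega) hcase
    · have hje : j = E := by omega
      subst hje
      have := hPM j hE
      have := hMpos j
      linarith
  have hMmono : ∀ E₁ E₂ : ℕ, K + N ≤ E₁ → E₁ ≤ E₂ → M E₁ ≤ M E₂ := by
    intro E₁ E₂ h1 h12
    induction E₂, h12 using Nat.le_induction with
    | base => exact le_rfl
    | succ E₂ hE₂ ih => exact ih.trans (hMmono1 E₂ (by omega))
  have hMdouble : ∀ E : ℕ, K + N ≤ E → 2 * M E ≤ M (E + N) := by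
    intro E hE
    apply hMge
    intro j h1 h2
    have hj1 : E ≤ j := by omega
    have h3 := hPM j (by omega)
    have h4 := hMmono E j hE hj1
    linarith
  have hMgrow : ∀ (i : ℕ) (E : ℕ), K + N ≤ E → (2:ℝ) ^ i * M E ≤ M (E + i * N) := by
    intro i
    induction i with
    | zero => intro E hE; simp
    | succ i ih =>
      intro E hE
      have h1 := ih E hE
      have h2 := hMdouble (E + i * N) (by omega)
      have h3 : E + (i + 1) * N = E + i * N + N := by ring
      rw [h3]
      have h5 : (2:ℝ) ^ (i + 1) * M E = 2 * ((2:ℝ) ^ i * M E) := by ring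
      rw [h5]
      calc 2 * ((2:ℝ) ^ i * M E) ≤ 2 * M (E + i * N) := by linarith
        _ ≤ M (E + i * N + N) := h2
  have hPle : ∀ E : ℕ, P E ≤ B ^ N * M E := by
    intro E
    obtain ⟨j0, h1, h2, h3⟩ := hMmem E
    have h4 := hsplit j0 E (by omega)
    have h5 : (∏ j ∈ Finset.Ioc j0 E, w j) ≤ B ^ N := by
      calc (∏ j ∈ Finset.Ioc j0 E, w j) ≤ ∏ _j ∈ Finset.Ioc j0 E, B :=
            Finset.prod_le_prod
              (fun i hi => (hwpos i (by have := (Finset.mem_Ioc.mp hi).1; omega)).le)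
              (fun i hi => hBw i (by have := (Finset.mem_Ioc.mp hi).1; omega))
        _ = B ^ (Finset.Ioc j0 E).card := by rw [Finset.prod_const]
        _ = B ^ (E - j0) := by rw [Nat.card_Ioc]
        _ ≤ B ^ N := pow_le_pow_right₀ hB1 (by omega)
    rw [h4, h3]
    calc P j0 * (∏ j ∈ Finset.Ioc j0 E, w j) ≤ P j0 * B ^ N :=
          mul_le_mul_of_nonneg_left h5 (hPpos j0).le
      _ = B ^ N * P j0 := mul_comm _ _
  -- choose a very long block
  have hμpos : 0 < M (K + N) := hMpos _
  have hAne : (Finset.Icc 0 (K + N)).Nonempty := ⟨0, Finset.mem_Icc.mpr ⟨le_rfl, Nat.zero_le _⟩⟩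
  set A : ℝ := (Finset.Icc 0 (K + N)).sup' hAne P with hAdef
  obtain ⟨Q₁, hQ₁⟩ := pow_unbounded_of_one_lt (B ^ N) (one_lt_two (α := ℝ))
  obtain ⟨Q₂, hQ₂⟩ := pow_unbounded_of_one_lt (A / M (K + N)) (one_lt_two (α := ℝ))
  set n : ℕ := K + N + N * (Q₁ + Q₂ + 1) with hndef
  have hn1 : 1 ≤ n := by omega
  have hnKN : K + N ≤ n := by omega
  obtain ⟨k, hk⟩ := exists_lt_of_ciInf_lt (lt_of_le_of_lt (hsupinf n hn1) one_lt_two)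
  have hblock : P (k + 1 + n) < 2 * P (k + 1) := by
    have heq := hshift k n
    have h6 : P (k + 1) * (∏ j ∈ Finset.Icc 1 n, w (k + 1 + j)) < P (k + 1) * 2 :=
      mul_lt_mul_of_pos_left hk (hPpos (k + 1))
    linarith
  have hend : 2 * M (k + 1 + n) < P (k + 1 + n) := hPM _ (by omega)
  rcases le_or_gt (K + N) (k + 1) with hcase | hcase
  · -- block starts beyond K + N
    have hq1 : Q₁ ≤ n / N := by
      refine (Nat.le_div_iff_mul_le (by omega)).mpr ?_
      calc Q₁ * N ≤ (Q₁ + Q₂ + 1) * N := Nat.mul_le_mul_right _ (by omega)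
        _ = N * (Q₁ + Q₂ + 1) := Nat.mul_comm _ _
        _ ≤ K + N + N * (Q₁ + Q₂ + 1) := Nat.le_add_left _ _
        _ = n := hndef.symm
    have hgrow := hMgrow (n / N) (k + 1) hcase
    have hmul : n / N * N ≤ n := Nat.div_mul_le_self n N
    have hmono := hMmono (k + 1 + n / N * N) (k + 1 + n) (by omega) (by omega)
    have hPk1 := hPle (k + 1)
    have hBN : B ^ N < 2 ^ (n / N) :=
      lt_of_lt_of_le hQ₁ (pow_le_pow_right₀ one_le_two hq1)
    have hmm := hMpos (k + 1)
    have hint : B ^ N * M (k + 1) < 2 ^ (n / N) * M (k + 1) :=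
      mul_lt_mul_of_pos_right hBN hmm
    linarith
  · -- block starts before K + N
    have hx : P (k + 1) ≤ A := by
      simp only [hAdef]
      exact Finset.le_sup' P (Finset.mem_Icc.mpr ⟨Nat.zero_le _, by omega⟩)
    set i : ℕ := (k + 1 + n - (K + N)) / N with hidef
    have hi2 : Q₂ ≤ i := by
      rw [hidef]
      refine (Nat.le_div_iff_mul_le (by omega)).mpr ?_
      have hsub : n - (K + N) = N * (Q₁ + Q₂ + 1) := by
        rw [hndef]; exact Nat.add_sub_cancel_left _ _
      calc Q₂ * N ≤ (Q₁ + Q₂ + 1) * N := Nat.mul_le_mul_right _ (by omega)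
        _ = N * (Q₁ + Q₂ + 1) := Nat.mul_comm _ _
        _ = n - (K + N) := hsub.symm
        _ ≤ k + 1 + n - (K + N) := by omega
    have h10 : i * N ≤ k + 1 + n - (K + N) := by
      rw [hidef]; exact Nat.div_mul_le_self _ _
    have hle : K + N + i * N ≤ k + 1 + n := by omega
    have hgrow := hMgrow i (K + N) le_rfl
    have hmono := hMmono (K + N + i * N) (k + 1 + n) (by omega) hle
    have h2i : (2:ℝ) ^ Q₂ ≤ 2 ^ i := pow_le_pow_right₀ one_le_two hi2
    have hA2 : A < 2 ^ Q₂ * M (K + N) := by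
      rw [div_lt_iff₀ hμpos] at hQ₂
      linarith
    have h9 : (2:ℝ) ^ Q₂ * M (K + N) ≤ 2 ^ i * M (K + N) :=
      mul_le_mul_of_nonneg_right h2i hμpos.le
    linarith
end

section
/- Let X be a separable Banach space, T : X → X a bounded linear operator, and x ∈ X. If there exists a nonempty open set O ⊆ X such that the return set N_T(x, W) = {n ≥ 0 : T^n x ∈ W} has positive upper density for every nonempty open W ⊆ O, then x is a U-frequently hypercyclic vector for T, i.e., N_T(x, U) has positive upper density for every nonempty open U ⊆ X. -/
open Filter Set

/-- The upper asymptotic density of a set of natural numbers. -/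
noncomputable def upperDensity (A : Set ℕ) : ℝ :=
  Filter.limsup (fun N : ℕ => ((A ∩ Set.Iic N).ncard : ℝ) / (N + 1)) Filter.atTop


section BFauxSection
open Polynomial

namespace BFaux

lemma densFun_nonneg (A : Set ℕ) (N : ℕ) : 0 ≤ ((A ∩ Set.Iic N).ncard : ℝ) / (N + 1) := by
  positivity

lemma densFun_le_one (A : Set ℕ) (N : ℕ) : ((A ∩ Set.Iic N).ncard : ℝ) / (N + 1) ≤ 1 := by
  rw [div_le_one (by positivity)]
  have h1 : (A ∩ Set.Iic N).ncard ≤ (Set.Iic N).ncard :=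
    Set.ncard_le_ncard inter_subset_right (Set.finite_Iic N)
  have h2 : (Set.Iic N).ncard = N + 1 := by
    rw [← Finset.coe_Iic, Set.ncard_coe_finset, Nat.card_Iic]
  calc ((A ∩ Set.Iic N).ncard : ℝ) ≤ ((Set.Iic N).ncard : ℝ) := by exact_mod_cast h1
    _ = (N : ℝ) + 1 := by rw [h2]; push_cast; ring

lemma upperDensity_zero_of_finite {A : Set ℕ} (hA : A.Finite) : upperDensity A = 0 := by
  have ht : Tendsto (fun N : ℕ => ((A ∩ Set.Iic N).ncard : ℝ) / (N + 1)) atTop (nhds 0) := by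
    apply squeeze_zero (densFun_nonneg A) (g := fun N : ℕ => (A.ncard : ℝ) / (N + 1))
    · intro N
      apply div_le_div_of_nonneg_right ?_ (by positivity) |>.trans_eq rfl
      · exact_mod_cast Set.ncard_le_ncard inter_subset_left hA
    · have : Tendsto (fun N : ℕ => ((N : ℝ) + 1)) atTop atTop :=
        tendsto_atTop_add_const_right _ 1 tendsto_natCast_atTop_atTop
      simpa using Tendsto.div_atTop tendsto_const_nhds this
  exact ht.limsup_eq

lemma infinite_of_upperDensity_pos {A : Set ℕ} (hA : 0 < upperDensity A) : A.Infinite := by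
  by_contra hfin
  rw [Set.not_infinite] at hfin
  rw [upperDensity_zero_of_finite hfin] at hA
  exact lt_irrefl _ hA

lemma upperDensity_pos_shift {A B : Set ℕ} (d : ℕ) (hsub : ∀ n ∈ A, n + d ∈ B)
    (hA : 0 < upperDensity A) : 0 < upperDensity B := by
  set f := fun N : ℕ => ((A ∩ Set.Iic N).ncard : ℝ) / (N + 1) with hf
  set g := fun N : ℕ => ((B ∩ Set.Iic N).ncard : ℝ) / (N + 1) with hg
  have hbddf : IsBoundedUnder (· ≥ ·) atTop f :=
    Filter.isBoundedUnder_of ⟨0, fun N => densFun_nonneg A N⟩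
  have hcobdd : IsCoboundedUnder (· ≤ ·) atTop f := hbddf.isCoboundedUnder_le
  set ε := upperDensity A / 2 with hε
  have hεpos : 0 < ε := by positivity
  have hεlt : ε < limsup f atTop := by
    show upperDensity A / 2 < upperDensity A
    linarith
  have hfreq : ∃ᶠ N in atTop, ε < f N := Filter.frequently_lt_of_lt_limsup hcobdd hεlt
  have hkey : ∀ N : ℕ, d ≤ N → ε < f N → ε / 2 ≤ g (N + d) := by
    intro N hdN hfN
    have hinj : Function.Injective (fun n : ℕ => n + d) := add_left_injective d
    have himg : (fun n : ℕ => n + d) '' (A ∩ Set.Iic N) ⊆ B ∩ Set.Iic (N + d) := by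
      rintro m ⟨n, ⟨hnA, hnN⟩, rfl⟩
      refine ⟨hsub n hnA, ?_⟩
      simp only [Set.mem_Iic] at hnN ⊢
      omega
    have hcard : (A ∩ Set.Iic N).ncard ≤ (B ∩ Set.Iic (N + d)).ncard := by
      rw [← Set.ncard_image_of_injective (A ∩ Set.Iic N) hinj]
      exact Set.ncard_le_ncard himg ((Set.finite_Iic (N + d)).subset inter_subset_right)
    have h1 : (0:ℝ) < (N:ℝ) + 1 := by positivity
    have h2 : (0:ℝ) < (N:ℝ) + (d:ℝ) + 1 := by positivity
    have hcA : ε * ((N:ℝ) + 1) < ((A ∩ Set.Iic N).ncard : ℝ) := by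
      rw [hf] at hfN
      simp only at hfN
      calc ε * ((N:ℝ) + 1) < ((A ∩ Set.Iic N).ncard : ℝ) / ((N:ℝ) + 1) * ((N:ℝ)+1) := by
            exact mul_lt_mul_of_pos_right hfN h1
        _ = ((A ∩ Set.Iic N).ncard : ℝ) := by field_simp
    have hcB : ((A ∩ Set.Iic N).ncard : ℝ) ≤ ((B ∩ Set.Iic (N + d)).ncard : ℝ) := by
      exact_mod_cast hcard
    simp only [hg]
    push_cast
    rw [le_div_iff₀ (by positivity)]
    have hdN' : (d:ℝ) ≤ (N:ℝ) := by exact_mod_cast hdN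
    nlinarith
  have hfreq2 : ∃ᶠ M in atTop, ε / 2 ≤ g M := by
    rw [Filter.frequently_atTop]
    intro a
    rw [Filter.frequently_atTop] at hfreq
    obtain ⟨N, hNa, hNf⟩ := hfreq (max a d)
    exact ⟨N + d, le_trans (le_max_left a d) (le_trans hNa (Nat.le_add_right N d)),
      hkey N (le_trans (le_max_right a d) hNa) hNf⟩
  have hbddg : IsBoundedUnder (· ≤ ·) atTop g :=
    Filter.isBoundedUnder_of ⟨1, fun N => densFun_le_one B N⟩
  have hfin : ε / 2 ≤ limsup g atTop := Filter.le_limsup_of_frequently_le hfreq2 hbddg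
  calc (0:ℝ) < ε / 2 := by positivity
    _ ≤ upperDensity B := hfin

lemma unbounded_of_upperDensity_pos {A : Set ℕ} (hA : 0 < upperDensity A) :
    ∀ m : ℕ, ∃ n, m ≤ n ∧ n ∈ A := by
  intro m
  obtain ⟨n, hn, hlt⟩ := (infinite_of_upperDensity_pos hA).exists_gt m
  exact ⟨n, hlt.le, hn⟩

end BFaux


namespace BFaux

/-- A geometric sequence in `ℝ≥0`-land cannot have closure containing an interval. -/
lemma geoReal (g a r₁ r₂ : ℝ) (h1 : 0 < r₁) (h2 : r₁ < r₂) (hg : 0 ≤ g) (ha : 0 ≤ a)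
    (hsub : Set.Ico r₁ r₂ ⊆ closure (Set.range fun n : ℕ => g ^ n * a)) : False := by
  set G := Set.range fun n : ℕ => g ^ n * a with hG
  -- find N with tail escape, then a finite trap
  have main : ∃ F : Set ℝ, F.Finite ∧ Set.Ico r₁ r₂ ⊆ F := by
    rcases eq_or_lt_of_le ha with ha0 | hapos
    · -- a = 0 : G = {0}
      refine ⟨{0}, Set.finite_singleton 0, ?_⟩
      intro u hu
      have := hsub hu
      have hGsub : G ⊆ {0} := by
        rintro v ⟨n, rfl⟩
        simp [← ha0]
      have : u ∈ closure ({0} : Set ℝ) := closure_mono hGsub this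
      simpa using this
    rcases lt_trichotomy g 1 with hg1 | hg1 | hg1
    · -- g < 1 : tail below r₁/2
      have htend : Tendsto (fun n : ℕ => g ^ n * a) atTop (nhds 0) := by
        simpa using (tendsto_pow_atTop_nhds_zero_of_lt_one hg hg1).mul_const a
      have hev : ∀ᶠ n in atTop, g ^ n * a < r₁ / 2 := by
        have := htend.eventually (eventually_lt_nhds (show (0:ℝ) < r₁/2 by positivity))
        simpa using this
      obtain ⟨N, hN⟩ := hev.exists_forall_of_atTop
      refine ⟨(fun n : ℕ => g ^ n * a) '' (Set.Iio N), (Set.finite_Iio N).image _, ?_⟩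
      intro u hu
      have hucl := hsub hu
      obtain ⟨hur1, hur2⟩ := hu
      -- G ∩ ball(u, r₁/2) ⊆ F
      have hsmall : G ∩ Metric.ball u (r₁/2) ⊆ (fun n : ℕ => g ^ n * a) '' (Set.Iio N) := by
        rintro v ⟨⟨n, rfl⟩, hball⟩
        by_cases hn : n < N
        · exact ⟨n, hn, rfl⟩
        · exfalso
          have := hN n (le_of_not_gt hn)
          rw [Metric.mem_ball, Real.dist_eq] at hball
          have : |g ^ n * a - u| ≥ r₁ / 2 := by
            rw [abs_sub_comm]
            rw [abs_of_pos (by linarith)]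
            linarith
          linarith [hball]
      have : u ∈ closure (G ∩ Metric.ball u (r₁/2)) := by
        rw [Metric.mem_closure_iff] at hucl ⊢
        intro ε hε
        obtain ⟨b, hbG, hbd⟩ := hucl (min ε (r₁/2)) (by positivity)
        exact ⟨b, ⟨hbG, by rw [Metric.mem_ball, dist_comm]; exact lt_of_lt_of_le hbd (min_le_right _ _)⟩,
          lt_of_lt_of_le hbd (min_le_left _ _)⟩
      have hclF : closure (G ∩ Metric.ball u (r₁/2)) ⊆ (fun n : ℕ => g ^ n * a) '' (Set.Iio N) := by
        apply closure_minimal hsmall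
        exact Set.Finite.isClosed ((Set.finite_Iio N).image _)
      exact hclF this
    · -- g = 1 : G = {a}
      refine ⟨{a}, Set.finite_singleton a, ?_⟩
      intro u hu
      have hGsub : G ⊆ {a} := by
        rintro v ⟨n, rfl⟩
        simp [hg1]
      have := closure_mono hGsub (hsub hu)
      simpa using this
    · -- g > 1 : tail above 2 r₂
      have htend : Tendsto (fun n : ℕ => g ^ n * a) atTop atTop := by
        exact Tendsto.atTop_mul_const hapos (tendsto_pow_atTop_atTop_of_one_lt hg1)
      have hev : ∀ᶠ n in atTop, g ^ n * a > 2 * r₂ :=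
        htend.eventually_gt_atTop (2 * r₂)
      obtain ⟨N, hN⟩ := hev.exists_forall_of_atTop
      refine ⟨(fun n : ℕ => g ^ n * a) '' (Set.Iio N), (Set.finite_Iio N).image _, ?_⟩
      intro u hu
      have hucl := hsub hu
      obtain ⟨hur1, hur2⟩ := hu
      have hsmall : G ∩ Metric.ball u r₂ ⊆ (fun n : ℕ => g ^ n * a) '' (Set.Iio N) := by
        rintro v ⟨⟨n, rfl⟩, hball⟩
        by_cases hn : n < N
        · exact ⟨n, hn, rfl⟩
        · exfalso
          have h3 := hN n (le_of_not_gt hn)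
          simp only [Metric.mem_ball, Real.dist_eq] at hball
          rw [abs_lt] at hball
          obtain ⟨hb1, hb2⟩ := hball
          linarith
      have : u ∈ closure (G ∩ Metric.ball u r₂) := by
        rw [Metric.mem_closure_iff] at hucl ⊢
        intro ε hε
        obtain ⟨b, hbG, hbd⟩ := hucl (min ε r₂) (lt_min hε (by linarith))
        exact ⟨b, ⟨hbG, by rw [Metric.mem_ball, dist_comm]; exact lt_of_lt_of_le hbd (min_le_right _ _)⟩,
          lt_of_lt_of_le hbd (min_le_left _ _)⟩
      have hclF : closure (G ∩ Metric.ball u r₂) ⊆ (fun n : ℕ => g ^ n * a) '' (Set.Iio N) := by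
        apply closure_minimal hsmall
        exact Set.Finite.isClosed ((Set.finite_Iio N).image _)
      exact hclF this
  obtain ⟨F, hFfin, hFsub⟩ := main
  have : (Set.Ico r₁ r₂).Infinite := Set.Ico_infinite h2
  exact this (hFfin.subset hFsub)

/-- closure of a geometric orbit `μ^n * c` in a normed field cannot contain a nonempty open set. -/
lemma geoField {𝕜 : Type*} [NontriviallyNormedField 𝕜] [NormedSpace ℝ 𝕜] (μ c : 𝕜) (s : Set 𝕜)
    (hso : IsOpen s) (hsn : s.Nonempty)
    (hsub : s ⊆ closure (Set.range fun n : ℕ => μ ^ n * c)) : False := by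
  -- find a nonzero center with a ball inside s
  obtain ⟨x₀, hx₀⟩ := hsn
  obtain ⟨ε₀, hε₀, hball₀⟩ := Metric.isOpen_iff.1 hso x₀ hx₀
  -- pick x ≠ 0 in the ball
  have hxex : ∃ x : 𝕜, x ≠ 0 ∧ ∃ ε > 0, Metric.ball x ε ⊆ s := by
    by_cases hx0 : x₀ = 0
    · -- take a small nonzero element
      obtain ⟨k, hk⟩ := NormedField.exists_norm_lt 𝕜 (show (0:ℝ) < ε₀/2 by positivity)
      obtain ⟨hkpos, hklt⟩ := hk
      have hkne : k ≠ 0 := by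
        intro hke
        rw [hke] at hkpos
        simp at hkpos
      refine ⟨k, hkne, ε₀/2, by positivity, ?_⟩
      intro z hz
      apply hball₀
      rw [Metric.mem_ball] at hz ⊢
      rw [hx0]
      calc dist z 0 ≤ dist z k + dist k 0 := dist_triangle _ _ _
        _ < ε₀/2 + ε₀/2 := by
            rw [dist_zero_right] at *
            exact add_lt_add hz (by simpa using hklt)
        _ = ε₀ := by ring
    · exact ⟨x₀, hx0, ε₀, hε₀, hball₀⟩
  obtain ⟨x, hxne, ε, hε, hball⟩ := hxex
  -- norms of closure points lie in closure of norm-set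
  set G : Set ℝ := Set.range fun n : ℕ => ‖μ‖ ^ n * ‖c‖ with hGdef
  have hnorm : ∀ u ∈ closure (Set.range fun n : ℕ => μ ^ n * c), ‖u‖ ∈ closure G := by
    intro u hu
    rw [Metric.mem_closure_iff] at hu ⊢
    intro δ hδ
    obtain ⟨b, ⟨n, rfl⟩, hbd⟩ := hu δ hδ
    refine ⟨‖μ ^ n * c‖, ⟨n, by rw [norm_mul, norm_pow]⟩, ?_⟩
    rw [Real.dist_eq]
    calc |‖u‖ - ‖μ ^ n * c‖| ≤ ‖u - μ ^ n * c‖ := abs_norm_sub_norm_le _ _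
      _ = dist u (μ ^ n * c) := by rw [dist_eq_norm]
      _ < δ := hbd
  -- interval of achievable norms
  have hIco : Set.Ico ‖x‖ (‖x‖ + ε) ⊆ closure G := by
    intro r hr
    obtain ⟨hr1, hr2⟩ := hr
    have hxnorm : 0 < ‖x‖ := norm_pos_iff.2 hxne
    set q : 𝕜 := (r / ‖x‖ : ℝ) • x with hq
    have hqnorm : ‖q‖ = r := by
      rw [hq, norm_smul, Real.norm_eq_abs,
        abs_of_nonneg (div_nonneg (by linarith) hxnorm.le), div_mul_cancel₀ r (ne_of_gt hxnorm)]
    have hqball : q ∈ Metric.ball x ε := by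
      rw [Metric.mem_ball, dist_eq_norm]
      have hdiff : q - x = ((r - ‖x‖) / ‖x‖ : ℝ) • x := by
        calc q - x = (r/‖x‖ : ℝ) • x - (1:ℝ) • x := by rw [hq, one_smul]
          _ = ((r/‖x‖ - 1 : ℝ)) • x := by rw [sub_smul]
          _ = ((r - ‖x‖)/‖x‖ : ℝ) • x := by
              congr 1
              field_simp
      rw [hdiff, norm_smul, Real.norm_eq_abs,
        abs_of_nonneg (div_nonneg (by linarith) hxnorm.le),
        div_mul_cancel₀ _ (ne_of_gt hxnorm)]
      linarith
    have := hnorm q (hsub (hball hqball))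
    rw [hqnorm] at this
    exact this
  exact geoReal ‖μ‖ ‖c‖ ‖x‖ (‖x‖ + ε) (norm_pos_iff.2 hxne) (by linarith) (norm_nonneg μ)
    (norm_nonneg c) hIco

end BFaux


namespace BFaux

variable {X : Type*} [NormedAddCommGroup X] [NormedSpace ℝ X]

/-- From non-dense range of a continuous linear map, get a nonzero functional killing the range. -/
lemma exists_functional_of_not_denseRange {S : X →L[ℝ] X} (h : ¬ DenseRange S) :
    ∃ φ : X →L[ℝ] ℝ, φ ≠ 0 ∧ ∀ v, φ (S v) = 0 := by
  rw [DenseRange, dense_iff_closure_eq] at h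
  have hne : ∃ z₀, z₀ ∉ closure (Set.range S) := by
    by_contra hc
    push_neg at hc
    exact h (Set.eq_univ_of_forall hc)
  obtain ⟨z₀, hz₀⟩ := hne
  have hconv : Convex ℝ (closure (Set.range ⇑S)) := by
    have : Set.range ⇑S = ↑(LinearMap.range (S : X →ₗ[ℝ] X)) := by
      rw [LinearMap.coe_range]
      rfl
    rw [this]
    exact (LinearMap.range (S : X →ₗ[ℝ] X)).convex.closure
  obtain ⟨f, u, hfa, hfz⟩ := geometric_hahn_banach_closed_point hconv isClosed_closure hz₀
  have hu0 : 0 < u := by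
    have := hfa 0 (subset_closure ⟨0, map_zero S⟩)
    simpa using this
  refine ⟨f, ?_, ?_⟩
  · intro hf0
    rw [hf0] at hfz
    simp at hfz
    linarith
  · intro v
    by_contra hc
    set c := f (S v) with hcdef
    have key : ∀ t : ℝ, t * c < u := by
      intro t
      have : f (S (t • v)) < u := hfa _ (subset_closure ⟨t • v, rfl⟩)
      rwa [map_smul, map_smul, smul_eq_mul] at this
    rcases lt_or_gt_of_ne hc with hneg | hpos
    · have := key ((u + 1)/c)
      rw [div_mul_cancel₀ _ hc] at this
      linarith
    · have := key ((u + 1)/c)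
      rw [div_mul_cancel₀ _ hc] at this
      linarith

variable [CompleteSpace X]

/-- A nonzero functional that is a real eigenvector of the adjoint contradicts
somewhere-density of the orbit. -/
lemma no_real_eigenfunctional (T : X →L[ℝ] X) (y : X) (O : Set X) (hO : IsOpen O)
    (hOne : O.Nonempty) (hOrb : ∀ w ∈ O, ∀ ε > 0, ∃ n : ℕ, ‖(T ^ n) y - w‖ < ε)
    (φ : X →L[ℝ] ℝ) (hφ : φ ≠ 0) (A : ℝ) (heig : ∀ v, φ (T v) = A * φ v) : False := by
  have horb : ∀ n : ℕ, φ ((T ^ n) y) = A ^ n * φ y := by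
    intro n
    induction n with
    | zero => simp
    | succ n ih =>
      have : (T ^ (n+1)) y = T ((T ^ n) y) := by
        rw [pow_succ']
        rfl
      rw [this, heig, ih, pow_succ']
      ring
  have hsurj : Function.Surjective φ := by
    have hex : ∃ u, φ u ≠ 0 := by
      by_contra hc
      push_neg at hc
      exact hφ (by ext v; simpa using hc v)
    obtain ⟨u, hu⟩ := hex
    intro t
    exact ⟨(t / φ u) • u, by rw [map_smul, smul_eq_mul]; field_simp⟩
  have hopen : IsOpenMap φ := ContinuousLinearMap.isOpenMap φ hsurj
  apply geoField A (φ y) (φ '' O) (hopen O hO) (hOne.image φ)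
  rintro p ⟨w, hwO, rfl⟩
  rw [Metric.mem_closure_iff]
  intro ε hε
  obtain ⟨n, hn⟩ := hOrb w hwO (ε / (‖φ‖ + 1)) (by positivity)
  refine ⟨A ^ n * φ y, ⟨n, rfl⟩, ?_⟩
  rw [← horb n, Real.dist_eq]
  calc |φ w - φ ((T ^ n) y)| = |φ (w - (T ^ n) y)| := by rw [map_sub]
    _ ≤ ‖φ‖ * ‖w - (T ^ n) y‖ := φ.le_opNorm _
    _ ≤ ‖φ‖ * ‖(T ^ n) y - w‖ := by rw [norm_sub_rev]
    _ < ε := by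
        have hφn : (0:ℝ) ≤ ‖φ‖ := norm_nonneg φ
        have h2 : ‖φ‖ * ‖(T ^ n) y - w‖ ≤ ‖φ‖ * (ε / (‖φ‖ + 1)) :=
          mul_le_mul_of_nonneg_left hn.le hφn
        have h3 : ‖φ‖ * (ε / (‖φ‖ + 1)) < ε := by
          rw [mul_div_assoc']
          rw [div_lt_iff₀ (by positivity)]
          nlinarith
        -- careful: need strict; combine
        have h4 : ‖φ‖ * ‖(T ^ n) y - w‖ < ε := lt_of_le_of_lt h2 h3
        exact h4

/-- A complex eigen-pair of functionals contradicts somewhere-density of the orbit. -/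
lemma no_complex_eigenfunctional (T : X →L[ℝ] X) (y : X) (O : Set X) (hO : IsOpen O)
    (hOne : O.Nonempty) (hOrb : ∀ w ∈ O, ∀ ε > 0, ∃ n : ℕ, ‖(T ^ n) y - w‖ < ε)
    (φ₁ φ₂ : X →L[ℝ] ℝ) (b e : ℝ)
    (hr1 : ∀ v, φ₁ (T v) = b * φ₁ v + e * φ₂ v)
    (hr2 : ∀ v, φ₂ (T v) = b * φ₂ v - e * φ₁ v)
    (hsurj : ∀ s t : ℝ, ∃ v, φ₁ v = s ∧ φ₂ v = t) : False := by
  set Ψ : X →L[ℝ] ℂ := φ₁.smulRight (1:ℂ) + φ₂.smulRight Complex.I with hΨdef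
  have hre : ∀ v, (Ψ v).re = φ₁ v := by
    intro v
    simp [hΨdef, Complex.real_smul]
  have him : ∀ v, (Ψ v).im = φ₂ v := by
    intro v
    simp [hΨdef, Complex.real_smul]
  set μ : ℂ := Complex.mk b (-e) with hμdef
  have hμre : μ.re = b := rfl
  have hμim : μ.im = -e := rfl
  have hΨT : ∀ v, Ψ (T v) = μ * Ψ v := by
    intro v
    apply Complex.ext
    · rw [hre, Complex.mul_re, hμre, hμim, hre, him, hr1]
      ring
    · rw [him, Complex.mul_im, hμre, hμim, hre, him, hr2]
      ring
  have horb : ∀ n : ℕ, Ψ ((T ^ n) y) = μ ^ n * Ψ y := by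
    intro n
    induction n with
    | zero => simp
    | succ n ih =>
      have : (T ^ (n+1)) y = T ((T ^ n) y) := by
        rw [pow_succ']
        rfl
      rw [this, hΨT, ih, pow_succ']
      ring
  have hΨsurj : Function.Surjective Ψ := by
    intro z
    obtain ⟨v, hv1, hv2⟩ := hsurj z.re z.im
    exact ⟨v, Complex.ext (by rw [hre, hv1]) (by rw [him, hv2])⟩
  have hopen : IsOpenMap Ψ := ContinuousLinearMap.isOpenMap Ψ hΨsurj
  apply geoField μ (Ψ y) (Ψ '' O) (hopen O hO) (hOne.image Ψ)
  rintro p ⟨w, hwO, rfl⟩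
  rw [Metric.mem_closure_iff]
  intro ε hε
  obtain ⟨n, hn⟩ := hOrb w hwO (ε / (‖Ψ‖ + 1)) (by positivity)
  refine ⟨μ ^ n * Ψ y, ⟨n, rfl⟩, ?_⟩
  rw [← horb n, dist_eq_norm]
  calc ‖Ψ w - Ψ ((T ^ n) y)‖ = ‖Ψ (w - (T ^ n) y)‖ := by rw [map_sub]
    _ ≤ ‖Ψ‖ * ‖w - (T ^ n) y‖ := Ψ.le_opNorm _
    _ ≤ ‖Ψ‖ * ‖(T ^ n) y - w‖ := by rw [norm_sub_rev]
    _ < ε := by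
        have h2 : ‖Ψ‖ * ‖(T ^ n) y - w‖ ≤ ‖Ψ‖ * (ε / (‖Ψ‖ + 1)) :=
          mul_le_mul_of_nonneg_left hn.le (norm_nonneg Ψ)
        have h3 : ‖Ψ‖ * (ε / (‖Ψ‖ + 1)) < ε := by
          rw [mul_div_assoc']
          rw [div_lt_iff₀ (by positivity)]
          nlinarith [norm_nonneg Ψ]
        exact lt_of_le_of_lt h2 h3

end BFaux


namespace BFaux

lemma irred_natDegree_le_two (ℓ : ℝ[X]) (hirr : Irreducible ℓ) : ℓ.natDegree ≤ 2 := by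
  have hne : ℓ ≠ 0 := hirr.ne_zero
  have hndpos : 0 < ℓ.natDegree := by
    rcases Nat.eq_zero_or_pos ℓ.natDegree with h | h
    swap
    · exact h
    · exfalso
      apply hirr.not_isUnit
      rw [Polynomial.eq_C_of_natDegree_eq_zero h]
      rw [Polynomial.isUnit_C]
      apply isUnit_iff_ne_zero.2
      intro hc
      apply hne
      rw [Polynomial.eq_C_of_natDegree_eq_zero h, hc, map_zero]
  have hmap : (ℓ.map (algebraMap ℝ ℂ)).natDegree = ℓ.natDegree :=
    Polynomial.natDegree_map_eq_of_injective (algebraMap ℝ ℂ).injective ℓ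
  have hdeg : 0 < (ℓ.map (algebraMap ℝ ℂ)).degree := by
    rw [Polynomial.degree_eq_natDegree (fun hc => by
      rw [hc] at hmap
      simp at hmap
      omega)]
    exact_mod_cast by rw [hmap]; exact_mod_cast hndpos
  obtain ⟨z, hz⟩ := Complex.exists_root hdeg
  have haeval : (aeval z) ℓ = 0 := by
    rw [Polynomial.aeval_def, ← Polynomial.eval_map]
    exact hz
  have hdvd : minpoly ℝ z ∣ ℓ := minpoly.dvd ℝ z haeval
  have hint : IsIntegral ℝ z := IsIntegral.of_finite ℝ z
  have hmpnd : (minpoly ℝ z).natDegree ≤ 2 := by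
    have := minpoly.natDegree_le (A := ℝ) z
    rwa [Complex.finrank_real_complex] at this
  obtain ⟨k, hk⟩ := hdvd
  rcases hirr.isUnit_or_isUnit hk with hu | hu
  · exact absurd hu (minpoly.not_isUnit ℝ z)
  · have hk0 : k ≠ 0 := fun hc => hne (by rw [hk, hc, mul_zero])
    have hmp0 : minpoly ℝ z ≠ 0 := minpoly.ne_zero hint
    rw [hk, Polynomial.natDegree_mul hmp0 hk0, Polynomial.natDegree_eq_zero_of_isUnit hu]
    omega

variable {X : Type*} [NormedAddCommGroup X] [NormedSpace ℝ X] [CompleteSpace X]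

lemma denseRange_aeval_irreducible (T : X →L[ℝ] X) (y : X) (O : Set X) (hO : IsOpen O)
    (hOne : O.Nonempty) (hOrb : ∀ w ∈ O, ∀ ε > 0, ∃ n : ℕ, ‖(T ^ n) y - w‖ < ε)
    (ℓ : ℝ[X]) (hirr : Irreducible ℓ) : DenseRange ⇑(aeval T ℓ : X →L[ℝ] X) := by
  by_contra hnd
  obtain ⟨φ, hφ, hker⟩ := exists_functional_of_not_denseRange hnd
  have hnd2 := irred_natDegree_le_two ℓ hirr
  have hndpos : 0 < ℓ.natDegree := by
    rcases Nat.eq_zero_or_pos ℓ.natDegree with h | h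
    swap
    · exact h
    · exfalso
      apply hirr.not_isUnit
      rw [Polynomial.eq_C_of_natDegree_eq_zero h, Polynomial.isUnit_C]
      apply isUnit_iff_ne_zero.2
      intro hc
      exact hirr.ne_zero (by rw [Polynomial.eq_C_of_natDegree_eq_zero h, hc, map_zero])
  have hsum : ∀ v : X, (aeval T ℓ : X →L[ℝ] X) v
      = ∑ i ∈ Finset.range 3, ℓ.coeff i • ((T ^ i) v) := by
    intro v
    have : (aeval T ℓ : X →L[ℝ] X) = ∑ i ∈ Finset.range 3, ℓ.coeff i • (T ^ i) :=
      Polynomial.aeval_eq_sum_range' (by omega) T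
    rw [this]
    simp [ContinuousLinearMap.sum_apply]
  have hrel : ∀ v : X, ∑ i ∈ Finset.range 3, ℓ.coeff i * φ ((T ^ i) v) = 0 := by
    intro v
    have := hker v
    rw [hsum v] at this
    rw [← this, map_sum]
    congr 1
    ext i
    rw [map_smul, smul_eq_mul]
  interval_cases hnd : ℓ.natDegree
  · -- degree 1
    have hc1 : ℓ.coeff 1 ≠ 0 := by
      have := Polynomial.leadingCoeff_ne_zero.2 hirr.ne_zero
      rwa [Polynomial.leadingCoeff, hnd] at this
    have hc2 : ℓ.coeff 2 = 0 := Polynomial.coeff_eq_zero_of_natDegree_lt (by omega)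
    apply no_real_eigenfunctional T y O hO hOne hOrb φ hφ (-(ℓ.coeff 0) / ℓ.coeff 1)
    intro v
    have := hrel v
    rw [Finset.sum_range_succ, Finset.sum_range_succ, Finset.sum_range_one, hc2] at this
    simp only [pow_zero, pow_one, ContinuousLinearMap.one_apply, zero_mul, add_zero] at this
    field_simp
    linarith
  · -- degree 2
    have hc2 : ℓ.coeff 2 ≠ 0 := by
      have := Polynomial.leadingCoeff_ne_zero.2 hirr.ne_zero
      rwa [Polynomial.leadingCoeff, hnd] at this
    set α : ℝ := -(ℓ.coeff 1) / ℓ.coeff 2 with hα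
    set β : ℝ := -(ℓ.coeff 0) / ℓ.coeff 2 with hβ
    have hT2 : ∀ v : X, φ ((T ^ 2) v) = α * φ ((T ^ 1) v) + β * φ v := by
      intro v
      have := hrel v
      rw [Finset.sum_range_succ, Finset.sum_range_succ, Finset.sum_range_one] at this
      simp only [pow_zero, ContinuousLinearMap.one_apply] at this
      have hgoal : α * φ ((T ^ 1) v) + β * φ v
          = (-(ℓ.coeff 1) * φ ((T ^ 1) v) + -(ℓ.coeff 0) * φ v) / ℓ.coeff 2 := by
        rw [hα, hβ]
        ring
      rw [hgoal, eq_div_iff hc2]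
      linarith
    -- no real root
    have hnoroot : ∀ x₀ : ℝ, ¬ ℓ.IsRoot x₀ := by
      intro x₀ hroot
      obtain ⟨k, hk⟩ := (Polynomial.dvd_iff_isRoot).2 hroot
      rcases hirr.isUnit_or_isUnit hk with hu | hu
      · exact Polynomial.not_isUnit_X_sub_C x₀ hu
      · have hk0 : k ≠ 0 := fun hc => hirr.ne_zero (by rw [hk, hc, mul_zero])
        have : ℓ.natDegree = 1 := by
          rw [hk, Polynomial.natDegree_mul (Polynomial.X_sub_C_ne_zero x₀) hk0,
            Polynomial.natDegree_X_sub_C, Polynomial.natDegree_eq_zero_of_isUnit hu]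
        omega
    have hdisc : α ^ 2 + 4 * β < 0 := by
      by_contra hge
      push_neg at hge
      set s : ℝ := Real.sqrt (α ^ 2 + 4 * β) with hs
      have hs2 : s ^ 2 = α ^ 2 + 4 * β := Real.sq_sqrt hge
      set x₀ : ℝ := (α + s) / 2 with hx₀
      apply hnoroot x₀
      show ℓ.eval x₀ = 0
      have heval : ℓ.eval x₀ = ∑ i ∈ Finset.range 3, ℓ.coeff i * x₀ ^ i := by
        have h3 : ℓ.natDegree < 3 := by omega
        rw [Polynomial.eval_eq_sum_range' h3]
      rw [heval, Finset.sum_range_succ, Finset.sum_range_succ, Finset.sum_range_one]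
      have hx2 : x₀ ^ 2 = α * x₀ + β := by
        rw [hx₀]
        field_simp
        nlinarith [hs2]
      rw [hx2]
      have hαc : ℓ.coeff 1 = -α * ℓ.coeff 2 := by
        rw [hα]; field_simp
      have hβc : ℓ.coeff 0 = -β * ℓ.coeff 2 := by
        rw [hβ]; field_simp
      rw [hαc, hβc]
      ring
    set b : ℝ := α / 2 with hb
    have hbpos : 0 < -β - b ^ 2 := by
      rw [hb]
      nlinarith [hdisc]
    set e : ℝ := Real.sqrt (-β - b ^ 2) with he
    have hepos : 0 < e := by
      rw [he]
      exact Real.sqrt_pos.2 hbpos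
    have he2 : b ^ 2 + e ^ 2 = -β := by
      have hsq : e ^ 2 = -β - b ^ 2 := by
        rw [he]
        exact Real.sq_sqrt hbpos.le
      rw [hsq]
      ring
    have hαb : α = 2 * b := by rw [hb]; ring
    set φ₂ : X →L[ℝ] ℝ := e⁻¹ • (φ.comp T - b • φ) with hφ₂
    have hφ₂v : ∀ v, φ₂ v = (φ (T v) - b * φ v) / e := by
      intro v
      rw [hφ₂]
      simp only [ContinuousLinearMap.smul_apply, ContinuousLinearMap.sub_apply,
        ContinuousLinearMap.coe_comp', Function.comp_apply, smul_eq_mul]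
      rw [div_eq_inv_mul]
    have hr1 : ∀ v, φ (T v) = b * φ v + e * φ₂ v := by
      intro v
      rw [hφ₂v v]
      field_simp
      ring
    have hTv1 : ∀ v : X, (T ^ 1) v = T v := by intro v; simp
    have hT2' : ∀ v : X, (T ^ 2) v = T (T v) := by
      intro v
      rw [pow_two]
      rfl
    have hr2 : ∀ v, φ₂ (T v) = b * φ₂ v - e * φ v := by
      intro v
      rw [hφ₂v, hφ₂v]
      have h2 := hT2 v
      rw [hT2', hTv1] at h2
      rw [h2, hαb]
      have hβe : β = -(b^2 + e^2) := by linarith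
      rw [hβe]
      field_simp
      ring
    by_cases hdep : ∃ lam : ℝ, ∀ v, φ₂ v = lam * φ v
    · obtain ⟨lam, hlam⟩ := hdep
      apply no_real_eigenfunctional T y O hO hOne hOrb φ hφ (b + e * lam)
      intro v
      rw [hr1 v, hlam v]
      ring
    · push_neg at hdep
      have hex : ∃ u, φ u ≠ 0 := by
        by_contra hc
        push_neg at hc
        exact hφ (by ext v; simpa using hc v)
      obtain ⟨u₀, hu₀⟩ := hex
      set u : X := (φ u₀)⁻¹ • u₀ with hu
      have hφu : φ u = 1 := by
        rw [hu, map_smul, smul_eq_mul]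
        field_simp
      set lam : ℝ := φ₂ u with hlam
      obtain ⟨vb, hvb⟩ := hdep lam
      set w₁ : X := vb - (φ vb) • u with hw₁
      have hφw₁ : φ w₁ = 0 := by
        rw [hw₁, map_sub, map_smul, smul_eq_mul, hφu]
        ring
      have hφ₂w₁ : φ₂ w₁ ≠ 0 := by
        rw [hw₁, map_sub, map_smul, smul_eq_mul, ← hlam]
        intro hc
        apply hvb
        rw [mul_comm] at hc
        linarith
      apply no_complex_eigenfunctional T y O hO hOne hOrb φ φ₂ b e hr1 hr2
      intro s t
      refine ⟨s • u + ((t - s * lam) / (φ₂ w₁)) • w₁, ?_, ?_⟩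
      · simp only [map_add, map_smul, smul_eq_mul]
        rw [hφu, hφw₁]
        ring
      · simp only [map_add, map_smul, smul_eq_mul]
        rw [← hlam, div_mul_cancel₀ _ hφ₂w₁]
        ring
  
lemma denseRange_aeval (T : X →L[ℝ] X) (y : X) (O : Set X) (hO : IsOpen O)
    (hOne : O.Nonempty) (hOrb : ∀ w ∈ O, ∀ ε > 0, ∃ n : ℕ, ‖(T ^ n) y - w‖ < ε)
    (p : ℝ[X]) (hp : p ≠ 0) : DenseRange ⇑(aeval T p : X →L[ℝ] X) := by
  suffices H : ∀ n : ℕ, ∀ p : ℝ[X], p ≠ 0 → p.natDegree = n →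
      DenseRange ⇑(aeval T p : X →L[ℝ] X) by
    exact H p.natDegree p hp rfl
  intro n
  induction n using Nat.strong_induction_on with
  | _ n ih =>
    intro p hp hn
    rcases Nat.eq_zero_or_pos n with h0 | hpos
    swap
    · -- extract an irreducible factor
      have hnu : ¬ IsUnit p := by
        intro hu
        have := Polynomial.natDegree_eq_zero_of_isUnit hu
        omega
      obtain ⟨ℓ, hirr, q, hq⟩ := WfDvdMonoid.exists_irreducible_factor hnu hp
      have hq0 : q ≠ 0 := fun hc => hp (by rw [hq, hc, mul_zero])
      have hℓ0 : ℓ ≠ 0 := hirr.ne_zero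
      have hℓpos : 0 < ℓ.natDegree := by
        rcases Nat.eq_zero_or_pos ℓ.natDegree with h | h
        swap
        · exact h
        · exfalso
          apply hirr.not_isUnit
          rw [Polynomial.eq_C_of_natDegree_eq_zero h, Polynomial.isUnit_C]
          apply isUnit_iff_ne_zero.2
          intro hc
          exact hℓ0 (by rw [Polynomial.eq_C_of_natDegree_eq_zero h, hc, map_zero])
      have hdeg : q.natDegree < n := by
        have := Polynomial.natDegree_mul hℓ0 hq0
        rw [← hq, hn] at this
        omega
      have hdq : DenseRange ⇑(aeval T q : X →L[ℝ] X) := ih q.natDegree hdeg q hq0 rfl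
      have hdℓ : DenseRange ⇑(aeval T ℓ : X →L[ℝ] X) :=
        denseRange_aeval_irreducible T y O hO hOne hOrb ℓ hirr
      have hcomp : ⇑(aeval T p : X →L[ℝ] X)
          = ⇑(aeval T ℓ : X →L[ℝ] X) ∘ ⇑(aeval T q : X →L[ℝ] X) := by
        rw [hq, map_mul]
        rfl
      rw [hcomp]
      exact hdℓ.comp hdq (aeval T ℓ : X →L[ℝ] X).continuous
    · -- constant
      have hpc : p = Polynomial.C (p.coeff 0) := Polynomial.eq_C_of_natDegree_eq_zero (by omega)
      have hc0 : p.coeff 0 ≠ 0 := by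
        intro hc
        exact hp (by rw [hpc, hc, map_zero])
      apply Function.Surjective.denseRange
      intro v
      refine ⟨(p.coeff 0)⁻¹ • v, ?_⟩
      have hkey : ∀ w : X, (aeval T (Polynomial.C (p.coeff 0)) : X →L[ℝ] X) w
          = p.coeff 0 • w := by
        intro w
        rw [Polynomial.aeval_C, Algebra.algebraMap_eq_smul_one]
        simp only [ContinuousLinearMap.smul_apply, ContinuousLinearMap.one_apply]
      conv_lhs => rw [hpc]
      rw [hkey, smul_smul]
      field_simp
      rw [Polynomial.coeff_C_zero, div_self hc0, one_smul]

end BFaux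


namespace BFaux

variable {X : Type*} [NormedAddCommGroup X] [NormedSpace ℝ X] [CompleteSpace X]

/-- Core Bourdon–Feldman contradiction: if the orbit of `y` visits every nonempty open
subset of `O` at arbitrarily late times, `y ∈ O`, and the orbit completely misses the
nonempty open set `U`, we get a contradiction. -/
lemma bf_core (T : X →L[ℝ] X) (y : X) (O : Set X) (hO : IsOpen O) (hOne : O.Nonempty)
    (hyO : y ∈ O)
    (hvisit : ∀ W : Set X, IsOpen W → W.Nonempty → W ⊆ O → ∀ m : ℕ, ∃ n, m ≤ n ∧ (T ^ n) y ∈ W)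
    (U : Set X) (hU : IsOpen U) (hUne : U.Nonempty)
    (hmiss : ∀ n : ℕ, (T ^ n) y ∉ U) : False := by
  classical
  -- power decomposition helper
  have hpow : ∀ (a b : ℕ) (v : X), (T ^ (a + b)) v = (T ^ a) ((T ^ b) v) := by
    intro a b v
    rw [pow_add]
    exact ContinuousLinearMap.mul_apply _ _ _
  -- orbit approximates points of O
  have hOrbO : ∀ w ∈ O, ∀ ε > 0, ∃ n : ℕ, ‖(T ^ n) y - w‖ < ε := by
    intro w hw ε hε
    obtain ⟨n, -, hn⟩ := hvisit (O ∩ Metric.ball w ε) (hO.inter Metric.isOpen_ball)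
      ⟨w, hw, Metric.mem_ball_self hε⟩ inter_subset_left 0
    refine ⟨n, ?_⟩
    have := hn.2
    rwa [Metric.mem_ball, dist_eq_norm] at this
  set E : Set X := closure (Set.range fun n : ℕ => (T ^ n) y) with hE
  set V : Set X := interior E with hV
  set C : Set X := Eᶜ with hC
  have hEclosed : IsClosed E := isClosed_closure
  have hCopen : IsOpen C := hEclosed.isOpen_compl
  have hVopen : IsOpen V := isOpen_interior
  -- O is inside E
  have hOE : O ⊆ E := by
    intro w hw
    rw [hE, Metric.mem_closure_iff]
    intro ε hε
    obtain ⟨n, hn⟩ := hOrbO w hw ε hε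
    exact ⟨(T ^ n) y, ⟨n, rfl⟩, by rwa [dist_comm, dist_eq_norm]⟩
  have hOV : O ⊆ V := interior_maximal hOE hO
  have hVne : V.Nonempty := hOne.mono hOV
  -- U is in the complement
  have hUC : U ⊆ C := by
    intro u hu
    rw [hC, Set.mem_compl_iff]
    intro huE
    rw [hE, _root_.mem_closure_iff] at huE
    obtain ⟨v, hvU, ⟨n, rfl⟩⟩ := huE U hU hu
    exact hmiss n hvU
  have hCne : C.Nonempty := hUne.mono hUC
  -- E is invariant under all powers
  have hTE : ∀ n : ℕ, ∀ v ∈ E, (T ^ n) v ∈ E := by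
    intro n
    have hsub : Set.range (fun k : ℕ => (T ^ k) y) ⊆ (T ^ n) ⁻¹' E := by
      rintro _ ⟨k, rfl⟩
      show (T ^ n) ((T ^ k) y) ∈ E
      rw [← hpow n k y]
      exact subset_closure ⟨n + k, rfl⟩
    have hcl : E ⊆ (T ^ n) ⁻¹' E := by
      rw [hE]
      exact closure_minimal hsub (hEclosed.preimage (T ^ n).continuous)
    intro v hv
    exact hcl hv
  -- recurrence of y
  have hrec : ∀ δ > (0:ℝ), ∀ m : ℕ, ∃ n, m ≤ n ∧ ‖(T ^ n) y - y‖ < δ := by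
    intro δ hδ m
    obtain ⟨n, hn1, hn2⟩ := hvisit (O ∩ Metric.ball y δ) (hO.inter Metric.isOpen_ball)
      ⟨y, hyO, Metric.mem_ball_self hδ⟩ inter_subset_left m
    refine ⟨n, hn1, ?_⟩
    have := hn2.2
    rwa [Metric.mem_ball, dist_eq_norm] at this
  -- commutation
  have hcomm : ∀ (p : ℝ[X]) (n : ℕ) (v : X),
      (T ^ n) ((aeval T p : X →L[ℝ] X) v) = (aeval T p : X →L[ℝ] X) ((T ^ n) v) := by
    intro p n v
    have hmul : (T ^ n) * (aeval T p : X →L[ℝ] X) = (aeval T p : X →L[ℝ] X) * (T ^ n) := by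
      have h1 : (T : X →L[ℝ] X) ^ n = aeval T ((Polynomial.X : ℝ[X]) ^ n) := by
        rw [map_pow, Polynomial.aeval_X]
      rw [h1, ← map_mul, ← map_mul, mul_comm]
    calc (T ^ n) ((aeval T p : X →L[ℝ] X) v)
        = ((T ^ n) * (aeval T p : X →L[ℝ] X)) v := (ContinuousLinearMap.mul_apply _ _ _).symm
      _ = ((aeval T p : X →L[ℝ] X) * (T ^ n)) v := by rw [hmul]
      _ = (aeval T p : X →L[ℝ] X) ((T ^ n) v) := ContinuousLinearMap.mul_apply _ _ _
  -- density of polynomial images of y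
  have hdense : ∀ s : Set X, IsOpen s → s.Nonempty → ∃ p : ℝ[X], (aeval T p : X →L[ℝ] X) y ∈ s := by
    intro s hs hsne
    set S := Submodule.span ℝ (Set.range fun n : ℕ => (T ^ n) y) with hS
    have hOS : O ⊆ closure (S : Set X) := by
      intro w hw
      have h1 : E ⊆ closure (S : Set X) := by
        rw [hE]
        exact closure_mono Submodule.subset_span
      exact h1 (hOE hw)
    have htop : S.topologicalClosure = ⊤ := by
      apply Submodule.eq_top_of_nonempty_interior'
      obtain ⟨w, hw⟩ := hOne
      have : O ⊆ interior (S.topologicalClosure : Set X) := by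
        apply interior_maximal ?_ hO
        rw [Submodule.topologicalClosure_coe]
        exact hOS
      exact ⟨w, this hw⟩
    have hdS : Dense (S : Set X) := by
      rw [dense_iff_closure_eq, ← Submodule.topologicalClosure_coe, htop]
      rfl
    have hrepall : ∀ v ∈ Submodule.span ℝ (Set.range fun n : ℕ => (T ^ n) y),
        ∃ p : ℝ[X], (aeval T p : X →L[ℝ] X) y = v := by
      intro v hv
      induction hv using Submodule.span_induction with
      | mem v hv =>
          obtain ⟨n, rfl⟩ := hv
          exact ⟨Polynomial.X ^ n, by rw [map_pow, Polynomial.aeval_X]⟩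
      | zero => exact ⟨0, by simp⟩
      | add u w _ _ hu hw =>
          obtain ⟨p, hp⟩ := hu
          obtain ⟨q, hq⟩ := hw
          exact ⟨p + q, by rw [map_add, ContinuousLinearMap.add_apply, hp, hq]⟩
      | smul a u _ hu =>
          obtain ⟨p, hp⟩ := hu
          refine ⟨Polynomial.C a * p, ?_⟩
          rw [map_mul, Polynomial.aeval_C, ContinuousLinearMap.mul_apply, hp,
            Algebra.algebraMap_eq_smul_one, ContinuousLinearMap.smul_apply,
            ContinuousLinearMap.one_apply]
    obtain ⟨v, hvS, hvs⟩ := hdS.exists_mem_open hs hsne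
    obtain ⟨p, hp⟩ := hrepall v hvS
    exact ⟨p, hp ▸ hvs⟩
  -- orbit of a C-point stays in C
  have hC1 : ∀ p : ℝ[X], (aeval T p : X →L[ℝ] X) y ∈ C → ∀ n : ℕ,
      (T ^ n) ((aeval T p : X →L[ℝ] X) y) ∈ C := by
    intro p hz n
    by_contra hcon
    have hE' : (T ^ n) ((aeval T p : X →L[ℝ] X) y) ∈ E := by
      rw [hC, Set.mem_compl_iff, not_not] at hcon
      exact hcon
    apply hz
    show (aeval T p : X →L[ℝ] X) y ∈ E
    have hall : ∀ k, n ≤ k → (T ^ k) ((aeval T p : X →L[ℝ] X) y) ∈ E := by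
      intro k hk
      have heq : (T ^ k) ((aeval T p : X →L[ℝ] X) y)
          = (T ^ (k - n)) ((T ^ n) ((aeval T p : X →L[ℝ] X) y)) := by
        rw [← hpow, Nat.sub_add_cancel hk]
      rw [heq]
      exact hTE (k - n) _ hE'
    have hmem : (aeval T p : X →L[ℝ] X) y ∈
        closure {v | ∃ k, n ≤ k ∧ v = (T ^ k) ((aeval T p : X →L[ℝ] X) y)} := by
      rw [Metric.mem_closure_iff]
      intro ε hε
      obtain ⟨k, hk1, hk2⟩ := hrec (ε / (‖(aeval T p : X →L[ℝ] X)‖ + 1)) (by positivity) n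
      refine ⟨(T ^ k) ((aeval T p : X →L[ℝ] X) y), ⟨k, hk1, rfl⟩, ?_⟩
      rw [dist_eq_norm, hcomm p k y, ← map_sub]
      calc ‖(aeval T p : X →L[ℝ] X) (y - (T ^ k) y)‖
          ≤ ‖(aeval T p : X →L[ℝ] X)‖ * ‖y - (T ^ k) y‖ := ContinuousLinearMap.le_opNorm _ _
        _ = ‖(aeval T p : X →L[ℝ] X)‖ * ‖(T ^ k) y - y‖ := by rw [norm_sub_rev]
        _ ≤ ‖(aeval T p : X →L[ℝ] X)‖ * (ε / (‖(aeval T p : X →L[ℝ] X)‖ + 1)) :=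
            mul_le_mul_of_nonneg_left hk2.le (norm_nonneg _)
        _ < ε := by
            rw [mul_div_assoc', div_lt_iff₀ (by positivity)]
            nlinarith [norm_nonneg (aeval T p : X →L[ℝ] X), hε]
    have hsubE : closure {v | ∃ k, n ≤ k ∧ v = (T ^ k) ((aeval T p : X →L[ℝ] X) y)} ⊆ E := by
      apply closure_minimal ?_ hEclosed
      rintro v ⟨k, hk, rfl⟩
      exact hall k hk
    exact hsubE hmem
  -- C-points map E into the closure of C
  have hC2 : ∀ p : ℝ[X], (aeval T p : X →L[ℝ] X) y ∈ C → ∀ v ∈ E,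
      (aeval T p : X →L[ℝ] X) v ∈ closure C := by
    intro p hz v hv
    rw [Metric.mem_closure_iff]
    intro ε hε
    rw [hE, Metric.mem_closure_iff] at hv
    obtain ⟨b, ⟨n, rfl⟩, hb⟩ := hv (ε / (‖(aeval T p : X →L[ℝ] X)‖ + 1)) (by positivity)
    refine ⟨(T ^ n) ((aeval T p : X →L[ℝ] X) y), hC1 p hz n, ?_⟩
    rw [dist_eq_norm, hcomm p n y, ← map_sub]
    calc ‖(aeval T p : X →L[ℝ] X) (v - (T ^ n) y)‖
        ≤ ‖(aeval T p : X →L[ℝ] X)‖ * ‖v - (T ^ n) y‖ := ContinuousLinearMap.le_opNorm _ _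
      _ ≤ ‖(aeval T p : X →L[ℝ] X)‖ * (ε / (‖(aeval T p : X →L[ℝ] X)‖ + 1)) := by
          apply mul_le_mul_of_nonneg_left ?_ (norm_nonneg _)
          rw [← dist_eq_norm]
          exact hb.le
      _ < ε := by
          rw [mul_div_assoc', div_lt_iff₀ (by positivity)]
          nlinarith [norm_nonneg (aeval T p : X →L[ℝ] X), hε]
  -- the boundary contradiction
  have hVclosureC : ∀ z ∈ V, z ∉ closure C := by
    intro z hz hzc
    rw [_root_.mem_closure_iff] at hzc
    obtain ⟨w, hwV, hwC⟩ := hzc V hVopen hz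
    exact hwC (interior_subset hwV)
  have hboundary : ∀ p : ℝ[X], p ≠ 0 →
      (aeval T p : X →L[ℝ] X) y ∈ E → (aeval T p : X →L[ℝ] X) y ∈ V := by
    intro p hp0 hwE
    by_contra hwV
    set w := (aeval T p : X →L[ℝ] X) y with hw
    -- w is in the closure of C
    have hwC : w ∈ closure C := by
      rw [_root_.mem_closure_iff]
      intro o ho hwo
      by_contra hoc
      have hosub : o ⊆ E := by
        intro z hz
        by_contra hzE
        exact hoc ⟨z, hz, hzE⟩
      exact hwV (interior_maximal hosub ho hwo)
    -- iterates of w are in closure of C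
    have hsub1 : ∀ n : ℕ, (T ^ n) w ∈ closure C := by
      intro n
      rw [Metric.mem_closure_iff]
      intro ε hε
      set δ := ε / (‖(T ^ n : X →L[ℝ] X)‖ + 1) with hδ
      have hδpos : 0 < δ := by rw [hδ]; positivity
      have hball : (C ∩ Metric.ball w δ).Nonempty := by
        rw [Metric.mem_closure_iff] at hwC
        obtain ⟨c, hcC, hcd⟩ := hwC δ hδpos
        exact ⟨c, hcC, by rwa [Metric.mem_ball, dist_comm]⟩
      obtain ⟨r, hr⟩ := hdense (C ∩ Metric.ball w δ) (hCopen.inter Metric.isOpen_ball) hball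
      refine ⟨(T ^ n) ((aeval T r : X →L[ℝ] X) y), hC1 r hr.1 n, ?_⟩
      rw [dist_eq_norm, ← map_sub]
      calc ‖(T ^ n : X →L[ℝ] X) (w - (aeval T r : X →L[ℝ] X) y)‖
          ≤ ‖(T ^ n : X →L[ℝ] X)‖ * ‖w - (aeval T r : X →L[ℝ] X) y‖ :=
            ContinuousLinearMap.le_opNorm _ _
        _ ≤ ‖(T ^ n : X →L[ℝ] X)‖ * δ := by
            apply mul_le_mul_of_nonneg_left ?_ (norm_nonneg _)
            have := hr.2
            rw [Metric.mem_ball, dist_comm, dist_eq_norm] at this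
            exact this.le
        _ < ε := by
            rw [hδ, mul_div_assoc', div_lt_iff₀ (by positivity)]
            nlinarith [norm_nonneg (T ^ n : X →L[ℝ] X), hε]
    -- p maps E into closure of C
    have hsub2 : ∀ v ∈ E, (aeval T p : X →L[ℝ] X) v ∈ closure C := by
      intro v hv
      rw [Metric.mem_closure_iff]
      intro ε hε
      rw [hE, Metric.mem_closure_iff] at hv
      obtain ⟨b, ⟨n, rfl⟩, hb⟩ := hv (ε / (2 * (‖(aeval T p : X →L[ℝ] X)‖ + 1))) (by positivity)
      have hTn : (T ^ n) w ∈ closure C := hsub1 n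
      rw [Metric.mem_closure_iff] at hTn
      obtain ⟨c, hcC, hcd⟩ := hTn (ε/2) (by positivity)
      refine ⟨c, hcC, ?_⟩
      have hd1 : dist ((aeval T p : X →L[ℝ] X) v) ((T ^ n) w) < ε/2 := by
        rw [hw, hcomm p n y, dist_eq_norm, ← map_sub]
        calc ‖(aeval T p : X →L[ℝ] X) (v - (T ^ n) y)‖
            ≤ ‖(aeval T p : X →L[ℝ] X)‖ * ‖v - (T ^ n) y‖ := ContinuousLinearMap.le_opNorm _ _
          _ ≤ ‖(aeval T p : X →L[ℝ] X)‖ * (ε / (2 * (‖(aeval T p : X →L[ℝ] X)‖ + 1))) := by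
              apply mul_le_mul_of_nonneg_left ?_ (norm_nonneg _)
              rw [← dist_eq_norm]
              exact hb.le
          _ < ε/2 := by
              rw [mul_div_assoc', div_lt_iff₀ (by positivity)]
              nlinarith [norm_nonneg (aeval T p : X →L[ℝ] X), hε]
      calc dist ((aeval T p : X →L[ℝ] X) v) c
          ≤ dist ((aeval T p : X →L[ℝ] X) v) ((T ^ n) w) + dist ((T ^ n) w) c :=
            dist_triangle _ _ _
        _ < ε/2 + ε/2 := add_lt_add hd1 hcd
        _ = ε := by ring
    -- p maps everything into closure of C
    have hsub3 : ∀ v : X, (aeval T p : X →L[ℝ] X) v ∈ closure C := by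
      intro v
      rw [Metric.mem_closure_iff]
      intro ε hε
      set δ := ε / (2 * (‖(aeval T p : X →L[ℝ] X)‖ + 1)) with hδ
      have hδpos : 0 < δ := by rw [hδ]; positivity
      obtain ⟨r, hrv⟩ := hdense (Metric.ball v δ) Metric.isOpen_ball ⟨v, Metric.mem_ball_self hδpos⟩
      have hclose : dist ((aeval T p : X →L[ℝ] X) v)
          ((aeval T p : X →L[ℝ] X) ((aeval T r : X →L[ℝ] X) y)) < ε/2 := by
        rw [dist_eq_norm, ← map_sub]
        calc ‖(aeval T p : X →L[ℝ] X) (v - (aeval T r : X →L[ℝ] X) y)‖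
            ≤ ‖(aeval T p : X →L[ℝ] X)‖ * ‖v - (aeval T r : X →L[ℝ] X) y‖ :=
              ContinuousLinearMap.le_opNorm _ _
          _ ≤ ‖(aeval T p : X →L[ℝ] X)‖ * δ := by
              apply mul_le_mul_of_nonneg_left ?_ (norm_nonneg _)
              have := hrv
              rw [Metric.mem_ball, dist_comm, dist_eq_norm] at this
              exact this.le
          _ < ε/2 := by
              rw [hδ, mul_div_assoc', div_lt_iff₀ (by positivity)]
              nlinarith [norm_nonneg (aeval T p : X →L[ℝ] X), hε]
      have hmem2 : (aeval T p : X →L[ℝ] X) ((aeval T r : X →L[ℝ] X) y) ∈ closure C := by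
        by_cases hrE : (aeval T r : X →L[ℝ] X) y ∈ E
        · exact hsub2 _ hrE
        · have hrC : (aeval T r : X →L[ℝ] X) y ∈ C := by
            rw [hC, Set.mem_compl_iff]
            exact hrE
          have hswap : (aeval T p : X →L[ℝ] X) ((aeval T r : X →L[ℝ] X) y)
              = (aeval T r : X →L[ℝ] X) ((aeval T p : X →L[ℝ] X) y) := by
            calc (aeval T p : X →L[ℝ] X) ((aeval T r : X →L[ℝ] X) y)
                = ((aeval T p : X →L[ℝ] X) * (aeval T r : X →L[ℝ] X)) y :=
                  (ContinuousLinearMap.mul_apply _ _ _).symm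
              _ = (aeval T (p * r) : X →L[ℝ] X) y := by rw [map_mul]
              _ = (aeval T (r * p) : X →L[ℝ] X) y := by rw [mul_comm]
              _ = ((aeval T r : X →L[ℝ] X) * (aeval T p : X →L[ℝ] X)) y := by rw [map_mul]
              _ = (aeval T r : X →L[ℝ] X) ((aeval T p : X →L[ℝ] X) y) :=
                  ContinuousLinearMap.mul_apply _ _ _
          rw [hswap]
          exact hC2 r hrC w hwE
      rw [Metric.mem_closure_iff] at hmem2
      obtain ⟨c, hcC, hcd⟩ := hmem2 (ε/2) (by positivity)
      refine ⟨c, hcC, ?_⟩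
      calc dist ((aeval T p : X →L[ℝ] X) v) c
          ≤ dist ((aeval T p : X →L[ℝ] X) v) ((aeval T p : X →L[ℝ] X) ((aeval T r : X →L[ℝ] X) y))
            + dist ((aeval T p : X →L[ℝ] X) ((aeval T r : X →L[ℝ] X) y)) c := dist_triangle _ _ _
        _ < ε/2 + ε/2 := add_lt_add hclose hcd
        _ = ε := by ring
    -- contradiction with dense range
    have hdr := denseRange_aeval T y O hO hOne hOrbO p hp0
    obtain ⟨v₀, hv₀⟩ := hVne
    obtain ⟨ρ, hρ, hballV⟩ := Metric.isOpen_iff.1 hVopen v₀ hv₀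
    obtain ⟨u, hu⟩ := hdr.exists_dist_lt v₀ hρ
    have huV : (aeval T p : X →L[ℝ] X) u ∈ V := hballV (by rwa [Metric.mem_ball, dist_comm])
    exact hVclosureC _ huV (hsub3 u)
  -- now the connectedness argument
  obtain ⟨nstar, -, hnstar⟩ := hvisit O hO hOne (subset_refl O) 0
  -- a nonzero polynomial landing in C
  have hpC : ∃ p : ℝ[X], p ≠ 0 ∧ (aeval T p : X →L[ℝ] X) y ∈ C := by
    obtain ⟨c₀, hc₀⟩ := hCne
    obtain ⟨ρ, hρ, hballC⟩ := Metric.isOpen_iff.1 hCopen c₀ hc₀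
    have hv1 : ∃ v₁ : X, v₁ ≠ 0 := by
      by_cases hc0 : c₀ = 0
      · refine ⟨y, fun hy0 => ?_⟩
        have hyE : y ∈ E := hOE hyO
        rw [hy0] at hyE
        rw [hc0] at hc₀
        exact hc₀ hyE
      · exact ⟨c₀, hc0⟩
    obtain ⟨v₁, hv₁⟩ := hv1
    have hv₁n : (0:ℝ) < ‖v₁‖ := norm_pos_iff.2 hv₁
    set dv : X := (ρ/4) • (‖v₁‖⁻¹ • v₁) with hdv
    have hdvnorm : ‖dv‖ = ρ/4 := by
      rw [hdv, norm_smul, norm_smul, norm_inv, norm_norm, Real.norm_eq_abs,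
        abs_of_pos (by linarith)]
      field_simp
    have hB1 : Metric.ball c₀ (ρ/8) ⊆ C := by
      intro z hz
      apply hballC
      rw [Metric.mem_ball] at hz ⊢
      linarith
    have hB2 : Metric.ball (c₀ + dv) (ρ/8) ⊆ C := by
      intro z hz
      apply hballC
      rw [Metric.mem_ball] at hz ⊢
      calc dist z c₀ ≤ dist z (c₀ + dv) + dist (c₀ + dv) c₀ := dist_triangle _ _ _
        _ < ρ/8 + ρ/4 := by
            apply add_lt_add_of_lt_of_le hz
            rw [dist_eq_norm, add_sub_cancel_left, hdvnorm]
        _ < ρ := by linarith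
    obtain ⟨p₁, hp₁⟩ := hdense (Metric.ball c₀ (ρ/8)) Metric.isOpen_ball
      ⟨c₀, Metric.mem_ball_self (by positivity)⟩
    obtain ⟨p₂, hp₂⟩ := hdense (Metric.ball (c₀ + dv) (ρ/8)) Metric.isOpen_ball
      ⟨c₀ + dv, Metric.mem_ball_self (by positivity)⟩
    by_cases h1 : p₁ = 0
    · by_cases h2 : p₂ = 0
      · exfalso
        rw [h1] at hp₁
        rw [h2] at hp₂
        simp only [map_zero, ContinuousLinearMap.zero_apply] at hp₁ hp₂
        rw [Metric.mem_ball] at hp₁ hp₂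
        have : dist (c₀ + dv) c₀ ≤ dist (c₀ + dv) 0 + dist 0 c₀ := dist_triangle _ _ _
        rw [dist_eq_norm, add_sub_cancel_left, hdvnorm] at this
        rw [dist_comm] at hp₂
        linarith
      · exact ⟨p₂, h2, hB2 hp₂⟩
    · exact ⟨p₁, h1, hB1 hp₁⟩
  obtain ⟨pC, hpC0, hpCC⟩ := hpC
  set m := max (max (nstar + 1) (pC.natDegree + 1)) 2 with hm
  have hm2 : 2 ≤ m := le_max_right _ _
  have hmn : nstar < m :=
    lt_of_lt_of_le (Nat.lt_succ_self nstar) (le_trans (le_max_left _ _) (le_max_left _ _))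
  have hmp : pC.natDegree < m :=
    lt_of_lt_of_le (Nat.lt_succ_self _) (le_trans (le_max_right _ _) (le_max_left _ _))
  set ev : (Fin m → ℝ) → X := fun c => ∑ i : Fin m, c i • ((T ^ (i:ℕ)) y) with hev
  have hev_cont : Continuous ev := by
    apply continuous_finset_sum
    intro i _
    exact (continuous_apply i).smul continuous_const
  set pol : (Fin m → ℝ) → ℝ[X] :=
    fun c => ∑ i : Fin m, Polynomial.C (c i) * Polynomial.X ^ (i:ℕ) with hpol
  have hev_aeval : ∀ c, ev c = (aeval T (pol c) : X →L[ℝ] X) y := by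
    intro c
    rw [hev, hpol]
    simp only
    rw [map_sum, ContinuousLinearMap.sum_apply]
    apply Finset.sum_congr rfl
    intro i _
    rw [map_mul, map_pow, Polynomial.aeval_X, Polynomial.aeval_C,
      ContinuousLinearMap.mul_apply, Algebra.algebraMap_eq_smul_one,
      ContinuousLinearMap.smul_apply, ContinuousLinearMap.one_apply]
  have hpolcoeff : ∀ (c : Fin m → ℝ) (j : Fin m), (pol c).coeff (j:ℕ) = c j := by
    intro c j
    rw [hpol]
    simp only
    rw [Polynomial.finset_sum_coeff, Finset.sum_eq_single j]
    · rw [Polynomial.coeff_C_mul, Polynomial.coeff_X_pow, if_pos rfl, mul_one]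
    · intro i _ hij
      rw [Polynomial.coeff_C_mul, Polynomial.coeff_X_pow,
        if_neg (fun h => hij (Fin.ext h.symm)), mul_zero]
    · intro hj
      exact absurd (Finset.mem_univ j) hj
  have hpolne : ∀ c : Fin m → ℝ, c ≠ 0 → pol c ≠ 0 := by
    intro c hc hpc
    apply hc
    funext j
    have h1 := hpolcoeff c j
    rw [hpc] at h1
    simpa using h1.symm
  have hcover : ∀ c : Fin m → ℝ, c ≠ 0 → ev c ∈ V ∨ ev c ∈ C := by
    intro c hc
    by_cases hEc : ev c ∈ E
    · left
      have hb := hboundary (pol c) (hpolne c hc) (by rw [← hev_aeval]; exact hEc)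
      rw [← hev_aeval] at hb
      exact hb
    · right
      rw [hC, Set.mem_compl_iff]
      exact hEc
  have hAV : ev (Pi.single (⟨nstar, hmn⟩ : Fin m) (1:ℝ)) ∈ V := by
    have heq : ev (Pi.single (⟨nstar, hmn⟩ : Fin m) (1:ℝ)) = (T ^ nstar) y := by
      rw [hev]
      simp only
      rw [Finset.sum_eq_single (⟨nstar, hmn⟩ : Fin m)]
      · rw [Pi.single_eq_same, one_smul]
      · intro i _ hij
        rw [Pi.single_eq_of_ne hij, zero_smul]
      · intro hj
        exact absurd (Finset.mem_univ _) hj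
    rw [heq]
    exact hOV hnstar
  have hsingle_ne : (Pi.single (⟨nstar, hmn⟩ : Fin m) (1:ℝ) : Fin m → ℝ) ≠ 0 := by
    intro hc
    have h1 := congrFun hc (⟨nstar, hmn⟩ : Fin m)
    rw [Pi.single_eq_same] at h1
    simpa using h1
  have hAC : ev (fun i : Fin m => pC.coeff (i:ℕ)) ∈ C := by
    have heq : ev (fun i : Fin m => pC.coeff (i:ℕ)) = (aeval T pC : X →L[ℝ] X) y := by
      rw [hev]
      simp only
      have h1 : (aeval T pC : X →L[ℝ] X) = ∑ i ∈ Finset.range m, pC.coeff i • (T ^ i) :=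
        Polynomial.aeval_eq_sum_range' hmp T
      rw [h1, ContinuousLinearMap.sum_apply, Fin.sum_univ_eq_sum_range
        (fun i => pC.coeff i • ((T ^ i) y)) m]
      apply Finset.sum_congr rfl
      intro i _
      rw [ContinuousLinearMap.smul_apply]
    rw [heq]
    exact hpCC
  have hcC_ne : (fun i : Fin m => pC.coeff (i:ℕ)) ≠ 0 := by
    intro hc
    apply hpC0
    apply Polynomial.ext
    intro j
    rw [Polynomial.coeff_zero]
    by_cases hj : j < m
    · have h1 := congrFun hc (⟨j, hj⟩ : Fin m)
      simpa using h1
    · exact Polynomial.coeff_eq_zero_of_natDegree_lt (by omega)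
  have hrank : 1 < Module.rank ℝ (Fin m → ℝ) := by
    rw [rank_fin_fun]
    exact_mod_cast hm2
  have hpc2 := isPathConnected_compl_singleton_of_one_lt_rank hrank (0 : Fin m → ℝ)
  have hprec : IsPreconnected ({(0 : Fin m → ℝ)}ᶜ) := hpc2.isConnected.isPreconnected
  obtain ⟨z, hzc, hzV, hzC⟩ := hprec (ev ⁻¹' V) (ev ⁻¹' C) (hVopen.preimage hev_cont)
    (hCopen.preimage hev_cont)
    (fun c hc => hcover c (by simpa using hc))
    ⟨Pi.single (⟨nstar, hmn⟩ : Fin m) 1, by simpa using hsingle_ne, hAV⟩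
    ⟨fun i => pC.coeff (i:ℕ), by simpa using hcC_ne, hAC⟩
  exact hzC (interior_subset hzV)

end BFaux


end BFauxSection

/-- Bourdon–Feldman theorem for upper frequent hypercyclicity. Let
`X` be a separable Banach space, `T : X → X` a bounded linear operator and `x ∈ X`.
If there is a nonempty open set `O ⊆ X` such that the return set of `x` to every
nonempty open subset of `O` has positive upper density, then the return set of `x`
to every nonempty open subset of `X` has positive upper density, i.e., `x` is a
`𝒰`-frequently hypercyclic vector for `T`. -/
theorem uFreqHypercyclic_of_upperDensity_on_open {X : Type*} [NormedAddCommGroup X]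
    [NormedSpace ℝ X] [CompleteSpace X] [TopologicalSpace.SeparableSpace X]
    (T : X →L[ℝ] X) (x : X) (O : Set X) (hO : IsOpen O) (hOne : O.Nonempty)
    (h : ∀ W : Set X, W ⊆ O → IsOpen W → W.Nonempty →
      0 < upperDensity {n : ℕ | (T ^ n) x ∈ W}) :
    ∀ U : Set X, IsOpen U → U.Nonempty → 0 < upperDensity {n : ℕ | (T ^ n) x ∈ U} := by
  intro U hU hUne
  have hpow : ∀ (a b : ℕ) (v : X), (T ^ (a + b)) v = (T ^ a) ((T ^ b) v) := by
    intro a b v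
    rw [pow_add]
    exact ContinuousLinearMap.mul_apply _ _ _
  by_cases hex : ∃ (d : ℕ) (w : X), w ∈ O ∧ (T ^ d) w ∈ U
  · obtain ⟨d, w, hwO, hwU⟩ := hex
    set W := O ∩ (T ^ d) ⁻¹' U with hW
    have hWopen : IsOpen W := hO.inter (hU.preimage (T ^ d).continuous)
    have hWne : W.Nonempty := ⟨w, hwO, hwU⟩
    have hWsub : W ⊆ O := inter_subset_left
    have hpos := h W hWsub hWopen hWne
    apply BFaux.upperDensity_pos_shift d ?_ hpos
    intro n hn
    show (T ^ (n + d)) x ∈ U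
    have heq : (T ^ (n + d)) x = (T ^ d) ((T ^ n) x) := by
      rw [add_comm]
      exact hpow d n x
    rw [heq]
    exact hn.2
  · exfalso
    push_neg at hex
    -- find entry time into O
    have hO' := h O (subset_refl O) hO hOne
    obtain ⟨n₀, hn₀⟩ := (BFaux.infinite_of_upperDensity_pos hO').nonempty
    set y := (T ^ n₀) x with hy
    have hyO : y ∈ O := hn₀
    -- visits at late times
    have hvisit : ∀ W : Set X, IsOpen W → W.Nonempty → W ⊆ O →
        ∀ m : ℕ, ∃ n, m ≤ n ∧ (T ^ n) y ∈ W := by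
      intro W hWo hWne hWsub m
      have hpos := h W hWsub hWo hWne
      obtain ⟨k, hk1, hk2⟩ := BFaux.unbounded_of_upperDensity_pos hpos (m + n₀)
      refine ⟨k - n₀, by omega, ?_⟩
      have hkk : k - n₀ + n₀ = k := by omega
      have heq : (T ^ (k - n₀)) y = (T ^ k) x := by
        rw [hy, ← hpow, hkk]
      rw [heq]
      exact hk2
    -- orbit of y misses U
    have hmiss : ∀ n : ℕ, (T ^ n) y ∉ U := by
      intro n
      exact hex n y hyO
    exact BFaux.bf_core T y O hO hOne hyO hvisit U hU hUne hmiss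
end

section
/- Let (p_k)_{k≥1} and (g_k)_{k≥1} be sequences of natural numbers with p_k ≤ g_k < p_{k+1} for all k, and suppose that (p_k − g_{k−1})/p_k ≥ (k−1)/k for every k ≥ 2. If M ⊆ ⋃_{k≥1} [p_k, g_k], then the set ℕ \ M has upper asymptotic density 1. -/
open Filter Set

/-- Let `(p_k)_{k ≥ 1}` and `(g_k)_{k ≥ 1}` be natural numbers with
`p_k ≤ g_k < p_{k+1}` for all `k ≥ 1` and `(p_k - g_{k-1})/p_k ≥ (k-1)/k` for all
`k ≥ 2`. If `M ⊆ ⋃_{k ≥ 1} [p_k, g_k]`, then `ℕ \ M` has upper density `1`. -/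
theorem upperDensity_compl_eq_one_of_subset_iUnion (P G : ℕ → ℕ)
    (hPG : ∀ k : ℕ, 1 ≤ k → P k ≤ G k ∧ G k < P (k + 1))
    (hratio : ∀ k : ℕ, 2 ≤ k → ((k : ℝ) - 1) / (k : ℝ) ≤ ((P k : ℝ) - (G (k - 1) : ℝ)) / (P k : ℝ))
    (M : Set ℕ) (hM : M ⊆ ⋃ k ∈ {k : ℕ | 1 ≤ k}, Set.Icc (P k) (G k)) :
    upperDensity Mᶜ = 1 := by
  set f : ℕ → ℝ := fun N : ℕ => (((Mᶜ : Set ℕ) ∩ Set.Iic N).ncard : ℝ) / (N + 1) with hf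
  -- monotonicity of G on [1, ∞)
  have hGmono : ∀ j i : ℕ, 1 ≤ j → j ≤ i → G j ≤ G i := by
    intro j i hj hji
    induction i with
    | zero => omega
    | succ n ih =>
      rcases Nat.lt_or_ge j (n+1) with h | h
      · have hjn : j ≤ n := by omega
        have h1 : G j ≤ G n := ih hjn
        have h2 : G n < P (n+1) := (hPG n (by omega)).2
        have h3 : P (n+1) ≤ G (n+1) := (hPG (n+1) (by omega)).1
        omega
      · have : j = n+1 := by omega
        simp [this]
  -- P is monotone on [1,∞)
  have hPmono : ∀ j i : ℕ, 1 ≤ j → j ≤ i → P j ≤ P i := by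
    intro j i hj hji
    induction i with
    | zero => omega
    | succ n ih =>
      rcases Nat.lt_or_ge j (n+1) with h | h
      · have hjn : j ≤ n := by omega
        have h1 : P j ≤ P n := ih hjn
        have : P n ≤ G n := (hPG n (by omega)).1
        have h2 : G n < P (n+1) := (hPG n (by omega)).2
        omega
      · have : j = n+1 := by omega
        simp [this]
  -- P k ≥ k - 1
  have hPlb : ∀ k : ℕ, k - 1 ≤ P k := by
    intro k
    induction k with
    | zero => omega
    | succ n ih =>
      rcases Nat.eq_zero_or_pos n with h | h
      · omega
      · have h1 : P n ≤ G n := (hPG n h).1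
        have h2 : G n < P (n+1) := (hPG n h).2
        omega
  -- f N ≤ 1 always
  have hle1 : ∀ N : ℕ, f N ≤ 1 := by
    intro N
    have hfin : (Set.Iic N).Finite := Set.finite_Iic N
    have hsub : (Mᶜ : Set ℕ) ∩ Set.Iic N ⊆ Set.Iic N := Set.inter_subset_right
    have hcard : ((Mᶜ : Set ℕ) ∩ Set.Iic N).ncard ≤ (Set.Iic N).ncard :=
      Set.ncard_le_ncard hsub hfin
    have hIic : (Set.Iic N).ncard = N + 1 := by
      rw [← Finset.coe_Iic, Set.ncard_coe_finset, Nat.card_Iic]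
    rw [hf]
    have hpos : (0:ℝ) < (N:ℝ) + 1 := by positivity
    rw [div_le_one hpos]
    have : ((Mᶜ ∩ Set.Iic N).ncard : ℝ) ≤ ((N + 1 : ℕ) : ℝ) := by
      exact_mod_cast hIic ▸ hcard
    simpa using this
  have hge0 : ∀ N : ℕ, 0 ≤ f N := by
    intro N; rw [hf]; positivity
  -- key lower bound along N = P k - 1, for k ≥ 2
  have hkey : ∀ k : ℕ, 2 ≤ k → ((k:ℝ) - 1)/(k:ℝ) - 1/((P k : ℝ)) ≤ f (P k - 1) := by
    intro k hk
    have hPk1 : 1 ≤ P k := by have := hPlb k; omega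
    have hGlt : G (k-1) < P k := by
      have := (hPG (k-1) (by omega)).2
      have hkk : k - 1 + 1 = k := by omega
      rwa [hkk] at this
    have hsub : Set.Icc (G (k-1) + 1) (P k - 1) ⊆ (Mᶜ : Set ℕ) ∩ Set.Iic (P k - 1) := by
      intro m hm
      obtain ⟨hm1, hm2⟩ := hm
      refine ⟨?_, hm2⟩
      intro hmM
      have hx := hM hmM
      simp only [Set.mem_iUnion, Set.mem_setOf_eq, Set.mem_Icc, exists_prop] at hx
      obtain ⟨j, hjone, hjP, hjG⟩ := hx
      rcases Nat.lt_or_ge j k with h | h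
      · have : G j ≤ G (k-1) := hGmono j (k-1) hjone (by omega)
        omega
      · have : P k ≤ P j := hPmono k j (by omega) h
        omega
    have hfin : ((Mᶜ : Set ℕ) ∩ Set.Iic (P k - 1)).Finite :=
      (Set.finite_Iic _).subset Set.inter_subset_right
    have hcard : (Set.Icc (G (k-1) + 1) (P k - 1)).ncard ≤ ((Mᶜ : Set ℕ) ∩ Set.Iic (P k - 1)).ncard :=
      Set.ncard_le_ncard hsub hfin
    have hIcc : (Set.Icc (G (k-1) + 1) (P k - 1)).ncard = P k - (G (k-1) + 1) := by
      rw [← Finset.coe_Icc, Set.ncard_coe_finset, Nat.card_Icc]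
      omega
    have hcardR : (P k : ℝ) - (G (k-1) : ℝ) - 1 ≤ (((Mᶜ : Set ℕ) ∩ Set.Iic (P k - 1)).ncard : ℝ) := by
      have h1 : P k - (G (k-1) + 1) ≤ ((Mᶜ : Set ℕ) ∩ Set.Iic (P k - 1)).ncard := hIcc ▸ hcard
      have h2 : ((P k - (G (k-1) + 1) : ℕ) : ℝ) = (P k : ℝ) - (G (k-1) : ℝ) - 1 := by
        have hle : G (k-1) + 1 ≤ P k := hGlt
        push_cast [Nat.cast_sub hle]
        ring
      calc (P k : ℝ) - (G (k-1) : ℝ) - 1 = ((P k - (G (k-1) + 1) : ℕ) : ℝ) := h2.symm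
        _ ≤ _ := by exact_mod_cast h1
    have hN1 : ((P k - 1 : ℕ) : ℝ) + 1 = (P k : ℝ) := by
      have h3 : (P k - 1 : ℕ) + 1 = P k := by omega
      exact_mod_cast congrArg (fun n : ℕ => (n : ℝ)) h3
    have hPpos : (0:ℝ) < (P k : ℝ) := by exact_mod_cast hPk1
    rw [hf]
    show ((k:ℝ) - 1)/(k:ℝ) - 1/((P k : ℝ)) ≤ (((Mᶜ : Set ℕ) ∩ Set.Iic (P k - 1)).ncard : ℝ) / (((P k - 1 : ℕ):ℝ) + 1)
    rw [hN1]
    calc ((k:ℝ) - 1)/(k:ℝ) - 1/(P k : ℝ)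
        ≤ ((P k : ℝ) - (G (k-1) : ℝ))/(P k : ℝ) - 1/(P k : ℝ) := by
          linarith [hratio k hk]
      _ = ((P k : ℝ) - (G (k-1) : ℝ) - 1)/(P k : ℝ) := by ring
      _ ≤ _ := by gcongr
  -- the subsequence
  set φ : ℕ → ℕ := fun k => P k - 1 with hφdef
  have hφ : Tendsto φ atTop atTop := by
    apply tendsto_atTop_mono (f := fun k => k - 2)
    · intro k
      have := hPlb k
      simp only [hφdef]
      omega
    · exact tendsto_sub_atTop_nat 2
  -- lower bound function tending to 1
  have hl : Tendsto (fun k : ℕ => ((k:ℝ) - 1)/(k:ℝ) - ((k:ℝ) - 1)⁻¹) atTop (nhds 1) := by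
    have h1 : Tendsto (fun k : ℕ => (1:ℝ) - (k:ℝ)⁻¹ - ((k:ℝ) - 1)⁻¹) atTop (nhds (1 - 0 - 0 : ℝ)) := by
      refine Tendsto.sub (Tendsto.sub tendsto_const_nhds ?_) ?_
      · exact tendsto_inv_atTop_zero.comp tendsto_natCast_atTop_atTop
      · exact tendsto_inv_atTop_zero.comp
          (tendsto_atTop_add_const_right _ (-1) tendsto_natCast_atTop_atTop)
    norm_num at h1
    refine h1.congr' ?_
    filter_upwards [Filter.eventually_ge_atTop 1] with k hk
    have hk0 : (k:ℝ) ≠ 0 := by positivity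
    field_simp
  have hsq : Tendsto (f ∘ φ) atTop (nhds 1) := by
    refine tendsto_of_tendsto_of_tendsto_of_le_of_le' hl tendsto_const_nhds ?_ ?_
    · filter_upwards [Filter.eventually_ge_atTop 2] with k hk
      have hk1R : (1:ℝ) ≤ (k:ℝ) - 1 := by
        have : (2:ℝ) ≤ (k:ℝ) := by exact_mod_cast hk
        linarith
      have hPkR : (k:ℝ) - 1 ≤ (P k : ℝ) := by
        have := hPlb k
        have h2 : ((k - 1 : ℕ) : ℝ) ≤ (P k : ℝ) := by exact_mod_cast this
        have h3 : ((k - 1 : ℕ) : ℝ) = (k:ℝ) - 1 := by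
          have : 1 ≤ k := by omega
          push_cast [Nat.cast_sub this]
          ring
        linarith
      have hinv : 1/(P k : ℝ) ≤ ((k:ℝ) - 1)⁻¹ := by
        rw [one_div]
        exact inv_anti₀ (by linarith) hPkR
      calc ((k:ℝ) - 1)/(k:ℝ) - ((k:ℝ) - 1)⁻¹ ≤ ((k:ℝ) - 1)/(k:ℝ) - 1/(P k : ℝ) := by linarith
        _ ≤ f (φ k) := hkey k hk
    · filter_upwards with k using hle1 (φ k)
  -- conclusion
  have hbound : IsBoundedUnder (· ≤ ·) atTop f := ⟨1, by
    simp only [eventually_map]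
    exact Eventually.of_forall hle1⟩
  have hcobound : IsCoboundedUnder (· ≤ ·) atTop f := by
    refine IsBoundedUnder.isCoboundedUnder_le ⟨0, ?_⟩
    simp only [eventually_map]
    exact Eventually.of_forall hge0
  have hcobound2 : IsCoboundedUnder (· ≤ ·) (map φ atTop) f := by
    refine IsBoundedUnder.isCoboundedUnder_le ⟨0, ?_⟩
    simp only [eventually_map]
    exact Eventually.of_forall (fun k => hge0 (φ k))
  have hupper : upperDensity Mᶜ ≤ 1 := by
    exact limsup_le_of_le hcobound (Eventually.of_forall hle1)
  have hlower : 1 ≤ upperDensity Mᶜ := by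
    have h1 : limsup (f ∘ φ) atTop = 1 := hsq.limsup_eq
    have h2 : limsup (f ∘ φ) atTop = limsup f (map φ atTop) := limsup_comp f φ atTop
    have h3 : limsup f (map φ atTop) ≤ limsup f atTop :=
      limsup_le_limsup_of_le hφ hcobound2 hbound
    calc (1:ℝ) = limsup f (map φ atTop) := by rw [← h2, h1]
      _ ≤ limsup f atTop := h3
  exact le_antisymm hupper hlower
end

section
/- Let (p_k)_{k≥1} and (g_k)_{k≥1} be sequences of natural numbers with p_k ≤ g_k < p_{k+1} for all k, with p_1 = 1, and suppose that (p_k − g_{k−1})/(g_k + 1) ≥ (k−1)/k for every k ≥ 2. Then the set ℕ \ ⋃_{k≥1} [p_k, g_k] has lower asymptotic density 1. -/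
open Filter Set

/-- The lower asymptotic density of a set of natural numbers. -/
noncomputable def lowerDensity (A : Set ℕ) : ℝ :=
  Filter.liminf (fun N : ℕ => ((A ∩ Set.Iic N).ncard : ℝ) / (N + 1)) Filter.atTop

set_option maxHeartbeats 2000000 in
/-- Let `(p_k)_{k ≥ 1}` and `(g_k)_{k ≥ 1}` be natural numbers with
`p_k ≤ g_k < p_{k+1}` for all `k ≥ 1`, `p_1 = 1`, and
`(p_k - g_{k-1})/(g_k + 1) ≥ (k-1)/k` for all `k ≥ 2`. Then
`ℕ \ ⋃_{k ≥ 1} [p_k, g_k]` has lower density `1`. -/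
theorem lowerDensity_compl_iUnion_eq_one (P G : ℕ → ℕ) (hP1 : P 1 = 1)
    (hPG : ∀ k : ℕ, 1 ≤ k → P k ≤ G k ∧ G k < P (k + 1))
    (hratio : ∀ k : ℕ, 2 ≤ k →
      ((k : ℝ) - 1) / (k : ℝ) ≤ ((P k : ℝ) - (G (k - 1) : ℝ)) / ((G k : ℝ) + 1)) :
    lowerDensity (⋃ k ∈ {k : ℕ | 1 ≤ k}, Set.Icc (P k) (G k))ᶜ = 1 := by
  set A : Set ℕ := ⋃ k ∈ {k : ℕ | 1 ≤ k}, Set.Icc (P k) (G k) with hA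
  have hPle : ∀ k, 1 ≤ k → P k ≤ G k := fun k hk => (hPG k hk).1
  have hGP : ∀ k, 1 ≤ k → G k < P (k + 1) := fun k hk => (hPG k hk).2
  -- monotonicity
  have hPmono : ∀ i j, 1 ≤ i → i ≤ j → P i ≤ P j := by
    intro i j hi hij
    induction j, hij using Nat.le_induction with
    | base => exact le_rfl
    | succ j hij ih =>
      exact le_trans ih (le_of_lt (lt_of_le_of_lt (hPle j (le_trans hi hij)) (hGP j (le_trans hi hij))))
  have hGmono : ∀ i j, 1 ≤ i → i ≤ j → G i ≤ G j := by
    intro i j hi hij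
    induction j, hij using Nat.le_induction with
    | base => exact le_rfl
    | succ j hij ih =>
      exact le_trans ih (le_trans (le_of_lt (hGP j (le_trans hi hij))) (hPle (j+1) (by omega)))
  have hPgeK : ∀ j, 1 ≤ j → j ≤ P j := by
    intro j hj
    induction j, hj using Nat.le_induction with
    | base => omega
    | succ j hj ih =>
      have := hPle j hj
      have := hGP j hj
      omega
  -- membership in the complement
  have hmemA : ∀ m, m ∈ A ↔ ∃ i, 1 ≤ i ∧ P i ≤ m ∧ m ≤ G i := by
    intro m
    simp [hA, Set.mem_iUnion, Set.mem_Icc]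
    tauto
  have hzero : (0 : ℕ) ∉ A := by
    rw [hmemA]
    rintro ⟨i, hi, hPi, -⟩
    have := hPgeK i hi
    omega
  have hgap : ∀ j m, 1 ≤ j → G j < m → m < P (j + 1) → m ∉ A := by
    intro j m hj hGm hmP hmem
    rw [hmemA] at hmem
    obtain ⟨i, hi, hPi, hGi⟩ := hmem
    rcases le_or_gt i j with h | h
    · have := hGmono i j hi h; omega
    · have := hPmono (j+1) i (by omega) h; omega
  -- main counting bound
  have hcount : ∀ j N, 2 ≤ j → P j ≤ N → N < P (j + 1) →
      (P j - G (j - 1)) + (N - G j) ≤ (Aᶜ ∩ Set.Iic N).ncard := by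
    intro j N hj hPjN hNP
    have hj1 : 1 ≤ j - 1 := by omega
    have hGP' : G (j - 1) < P j := by
      have := hGP (j - 1) hj1
      have : G (j-1) < P (j - 1 + 1) := this
      rwa [Nat.sub_add_cancel (by omega)] at this
    have hG1 : 1 ≤ G (j - 1) := by
      have h1 := hPmono 1 (j-1) le_rfl hj1
      have h2 := hPle (j-1) hj1
      omega
    have hPjG : P j ≤ G j := hPle j (by omega)
    set S : Set ℕ := insert 0 (Set.Icc (G (j-1) + 1) (P j - 1) ∪ Set.Icc (G j + 1) N) with hS
    have hSsub : S ⊆ Aᶜ ∩ Set.Iic N := by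
      rintro m (rfl | (hm | hm))
      · exact ⟨hzero, by simp⟩
      · rw [Set.mem_Icc] at hm
        refine ⟨hgap (j-1) m hj1 (by omega) ?_, by simp; omega⟩
        rw [Nat.sub_add_cancel (by omega)]
        omega
      · rw [Set.mem_Icc] at hm
        exact ⟨hgap j m (by omega) (by omega) (by omega), by simp [hm.2]⟩
    have hfin : (Aᶜ ∩ Set.Iic N).Finite := (Set.finite_Iic N).inter_of_right _
    have hcard : S.ncard = (P j - G (j-1) - 1) + (N - G j) + 1 := by
      have hd : Disjoint (Set.Icc (G (j-1) + 1) (P j - 1)) (Set.Icc (G j + 1) N) := by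
        rw [Set.disjoint_left]
        intro m hm hm'
        rw [Set.mem_Icc] at hm hm'
        omega
      have hIcc : ∀ a b : ℕ, (Set.Icc a b).ncard = b + 1 - a := by
        intro a b
        rw [← Finset.coe_Icc, Set.ncard_coe_finset, Nat.card_Icc]
      have h0 : (0 : ℕ) ∉ Set.Icc (G (j-1) + 1) (P j - 1) ∪ Set.Icc (G j + 1) N := by
        simp
      rw [hS, Set.ncard_insert_of_notMem h0
          (((Set.finite_Icc _ _).union (Set.finite_Icc _ _))),
        Set.ncard_union_eq hd (Set.finite_Icc _ _) (Set.finite_Icc _ _), hIcc, hIcc]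
      omega
    have := Set.ncard_le_ncard hSsub hfin
    omega
  -- real-valued bound
  have hreal : ∀ k N, 2 ≤ k → P k ≤ N →
      ((k : ℝ) - 1) / k * ((N : ℝ) + 1) ≤ ((Aᶜ ∩ Set.Iic N).ncard : ℝ) := by
    intro k N hk hkN
    set j := Nat.findGreatest (fun i => P i ≤ N) N with hj
    have hkj : k ≤ j := Nat.le_findGreatest (le_trans (hPgeK k (by omega)) hkN) hkN
    have hj2 : 2 ≤ j := le_trans hk hkj
    have hPjN : P j ≤ N := Nat.findGreatest_spec (P := fun i => P i ≤ N)
      (le_trans (hPgeK k (by omega)) hkN) hkN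
    have hNP : N < P (j + 1) := by
      rcases le_or_gt (j + 1) N with h | h
      · have h2 : ¬ (P (j + 1) ≤ N) :=
          Nat.findGreatest_is_greatest (P := fun i => P i ≤ N) (by omega) h
        omega
      · have := hPgeK (j+1) (by omega)
        omega
    have hcnt := hcount j N hj2 hPjN hNP
    have hGjm : G (j-1) < P j := by
      have := hGP (j-1) (by omega)
      rwa [Nat.sub_add_cancel (by omega)] at this
    have hrat := hratio j hj2
    have hjpos : (0 : ℝ) < (j : ℝ) := by positivity
    have hGpos : (0 : ℝ) < (G j : ℝ) + 1 := by positivity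
    have hrat' : ((j : ℝ) - 1) / j * ((G j : ℝ) + 1) ≤ (P j : ℝ) - (G (j-1) : ℝ) := by
      have h := mul_le_mul_of_nonneg_right hrat (le_of_lt hGpos)
      rwa [div_mul_cancel₀ _ (ne_of_gt hGpos)] at h
    have hfrac1 : ((j : ℝ) - 1) / j ≤ 1 := by
      rw [div_le_one hjpos]; linarith
    have hfrac0 : (0 : ℝ) ≤ ((j : ℝ) - 1) / j := by
      apply div_nonneg _ (le_of_lt hjpos)
      have : (2 : ℝ) ≤ (j : ℝ) := by exact_mod_cast hj2
      linarith
    have hkk : ((k : ℝ) - 1) / k ≤ ((j : ℝ) - 1) / j := by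
      have hkpos : (0 : ℝ) < (k : ℝ) := by positivity
      rw [div_le_div_iff₀ hkpos hjpos]
      have : (k : ℝ) ≤ (j : ℝ) := by exact_mod_cast hkj
      nlinarith
    have hstep : ((j : ℝ) - 1) / j * ((N : ℝ) + 1) ≤ ((P j - G (j-1)) + (N - G j) : ℕ) := by
      rcases le_or_gt (G j) N with h | h
      · have hcast : (((P j - G (j-1)) + (N - G j) : ℕ) : ℝ)
            = ((P j : ℝ) - (G (j-1) : ℝ)) + ((N : ℝ) - (G j : ℝ)) := by
          push_cast [Nat.cast_sub (le_of_lt hGjm), Nat.cast_sub h]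
          ring
        rw [hcast]
        have h2 : ((j : ℝ) - 1) / j * ((N : ℝ) - (G j : ℝ)) ≤ (N : ℝ) - (G j : ℝ) := by
          have hnn : (0:ℝ) ≤ (N : ℝ) - (G j : ℝ) := by
            have : (G j : ℝ) ≤ (N : ℝ) := by exact_mod_cast h
            linarith
          nlinarith
        nlinarith
      · have hNG : N - G j = 0 := by omega
        rw [hNG]
        have hcast : (((P j - G (j-1)) + 0 : ℕ) : ℝ) = (P j : ℝ) - (G (j-1) : ℝ) := by
          push_cast [Nat.cast_sub (le_of_lt hGjm)]; ring
        rw [hcast]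
        have hN1 : (N : ℝ) + 1 ≤ (G j : ℝ) + 1 := by
          have : (N : ℝ) ≤ (G j : ℝ) := by exact_mod_cast le_of_lt h
          linarith
        nlinarith
    have hfin : ((((P j - G (j-1)) + (N - G j)) : ℕ) : ℝ) ≤ ((Aᶜ ∩ Set.Iic N).ncard : ℝ) := by
      exact_mod_cast hcnt
    have hN0 : (0:ℝ) ≤ (N : ℝ) + 1 := by positivity
    calc ((k : ℝ) - 1) / k * ((N : ℝ) + 1) ≤ ((j : ℝ) - 1) / j * ((N : ℝ) + 1) :=
          mul_le_mul_of_nonneg_right hkk hN0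
      _ ≤ _ := le_trans hstep hfin
  -- the density sequence
  set u : ℕ → ℝ := fun N => ((Aᶜ ∩ Set.Iic N).ncard : ℝ) / ((N : ℝ) + 1) with hu
  have hu1 : ∀ N, u N ≤ 1 := by
    intro N
    rw [hu]
    have hsub : Aᶜ ∩ Set.Iic N ⊆ Set.Iic N := Set.inter_subset_right
    have hcard : (Aᶜ ∩ Set.Iic N).ncard ≤ N + 1 := by
      have := Set.ncard_le_ncard hsub (Set.finite_Iic N)
      have hI : (Set.Iic N).ncard = N + 1 := by
        rw [← Finset.coe_Iic, Set.ncard_coe_finset, Nat.card_Iic]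
      omega
    have hpos : (0:ℝ) < (N : ℝ) + 1 := by positivity
    rw [div_le_one hpos]
    exact_mod_cast hcard
  have hu0 : ∀ N, 0 ≤ u N := fun N => by positivity
  have hbddle : IsBoundedUnder (· ≤ ·) atTop u := Filter.isBoundedUnder_of ⟨1, hu1⟩
  have hbddge : IsBoundedUnder (· ≥ ·) atTop u := Filter.isBoundedUnder_of ⟨0, hu0⟩
  have hL1 : liminf u atTop ≤ 1 := by
    apply liminf_le_of_le hbddge
    intro b hb
    obtain ⟨N, hN⟩ := hb.exists
    exact le_trans hN (hu1 N)
  have hLk : ∀ k : ℕ, 2 ≤ k → ((k : ℝ) - 1) / k ≤ liminf u atTop := by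
    intro k hk
    apply le_liminf_of_le hbddle.isCoboundedUnder_ge
    rw [Filter.eventually_atTop]
    refine ⟨P k, fun N hN => ?_⟩
    have hpos : (0:ℝ) < (N : ℝ) + 1 := by positivity
    rw [hu, le_div_iff₀ hpos]
    exact hreal k N hk hN
  have h1L : 1 ≤ liminf u atTop := by
    have htend : Tendsto (fun k : ℕ => ((k : ℝ) - 1) / k) atTop (nhds 1) := by
      have h0 : Tendsto (fun k : ℕ => 1 - 1 / (k : ℝ)) atTop (nhds 1) := by
        have := tendsto_one_div_atTop_nhds_zero_nat (𝕜 := ℝ)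
        have := (tendsto_const_nhds (x := (1:ℝ)) (f := atTop)).sub this
        simpa using this
      apply h0.congr'
      filter_upwards [Filter.eventually_ge_atTop 1] with k hk
      have hkpos : (0:ℝ) < (k : ℝ) := by positivity
      field_simp
    refine le_of_tendsto htend ?_
    filter_upwards [Filter.eventually_ge_atTop 2] with k hk
    exact hLk k hk
  have : liminf u atTop = 1 := le_antisymm hL1 h1L
  exact this
end

section
/- Let w = (ω_k)_{k≥1} be a bounded sequence of positive real numbers with inf_{k≥1} ω_k > 0 and satisfying sup_{n≥1} inf_{k≥1} ∏_{j=1}^{n} ω_{k+j} ≤ 1. Set β := max{ sup_{k≥1} ω_k, (inf_{k≥1} ω_k)^{-1} }. Then for every N ∈ ℕ the set C_{N,β} := { k ∈ ℕ : ∏_{j=k+1}^{k+2^N} ω_j ≤ β } is infinite. -/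
private lemma prod_shift (w : ℕ → ℝ) (k n : ℕ) :
    ∏ j ∈ Finset.Icc 1 n, w (k + 1 + j) = ∏ i ∈ Finset.Ioc (k + 1) (k + 1 + n), w i := by
  induction n with
  | zero => simp
  | succ n ih =>
    rw [Finset.prod_Icc_succ_top (by omega : 1 ≤ n + 1),
      show k + 1 + (n + 1) = (k + 1 + n) + 1 by omega,
      Finset.prod_Ioc_succ_top (by omega : k + 1 ≤ k + 1 + n), ih]

/-- Let `w = (ω_k)_{k ≥ 1}` be a bounded sequence of positive reals
with `inf_{k ≥ 1} ω_k > 0` and `sup_{n ≥ 1} inf_{k ≥ 1} ∏_{j=1}^n ω_{k+j} ≤ 1`, and set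
`β = max (sup_{k ≥ 1} ω_k) (inf_{k ≥ 1} ω_k)⁻¹`. Then for every `N ≥ 1` the set
`C_{N,β} = {k ≥ 1 : ∏_{j=k+1}^{k+2^N} ω_j ≤ β}` is infinite. -/
theorem weightSet_C_infinite (w : ℕ → ℝ) (hwpos : ∀ k : ℕ, 1 ≤ k → 0 < w k)
    (hwbdd : BddAbove (Set.range fun k : ℕ => w (k + 1)))
    (hinf : 0 < ⨅ k : ℕ, w (k + 1))
    (hsupinf : ∀ n : ℕ, 1 ≤ n → (⨅ k : ℕ, ∏ j ∈ Finset.Icc 1 n, w (k + 1 + j)) ≤ 1) :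
    ∀ N : ℕ, 1 ≤ N →
      {k : ℕ | 1 ≤ k ∧ ∏ j ∈ Finset.Icc (k + 1) (k + 2 ^ N), w j ≤
        max (⨆ k : ℕ, w (k + 1)) (⨅ k : ℕ, w (k + 1))⁻¹}.Infinite := by
  intro N _hN
  set a := ⨅ k : ℕ, w (k + 1) with ha
  set B := ⨆ k : ℕ, w (k + 1) with hB
  set β := max B a⁻¹ with hβ
  have ha_pos : 0 < a := hinf
  have hbddb : BddBelow (Set.range fun k : ℕ => w (k + 1)) := by
    by_contra h
    rw [ha, Real.iInf_of_not_bddBelow h] at ha_pos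
    exact lt_irrefl 0 ha_pos
  have ha_le : ∀ i : ℕ, 1 ≤ i → a ≤ w i := by
    intro i hi
    obtain ⟨k, rfl⟩ : ∃ k, i = k + 1 := ⟨i - 1, by omega⟩
    exact ciInf_le hbddb k
  have hβ1 : 1 ≤ β := by
    rcases le_or_gt 1 B with h | h
    · exact le_trans h (le_max_left _ _)
    · have haB : a ≤ B := le_trans (ha_le 1 le_rfl) (le_ciSup hwbdd 0)
      have haw : a < 1 := lt_of_le_of_lt haB h
      have : 1 ≤ a⁻¹ := by
        nlinarith [inv_mul_cancel₀ (ne_of_gt ha_pos), inv_pos.mpr ha_pos]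
      exact le_trans this (le_max_right _ _)
  -- positive lower bound c ≤ 1 for all weights
  set c := min a 1 with hc
  have hc_pos : 0 < c := lt_min ha_pos one_pos
  have hc_le1 : c ≤ 1 := min_le_right _ _
  have hc_le : ∀ i : ℕ, 1 ≤ i → c ≤ w i := fun i hi => le_trans (min_le_left _ _) (ha_le i hi)
  -- lower bound for an arbitrary block
  have block_lb : ∀ s t : ℕ, c ^ (t - s) ≤ ∏ i ∈ Finset.Ioc s t, w i := by
    intro s t
    calc c ^ (t - s) = ∏ _i ∈ Finset.Ioc s t, c := by
          rw [Finset.prod_const, Nat.card_Ioc]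
      _ ≤ ∏ i ∈ Finset.Ioc s t, w i := by
          apply Finset.prod_le_prod
          · intro i _; exact le_of_lt hc_pos
          · intro i hi
            exact hc_le i (by have := (Finset.mem_Ioc.mp hi).1; omega)
  by_contra hfin
  rw [Set.not_infinite] at hfin
  obtain ⟨K₀, hK₀⟩ := hfin.bddAbove
  set K := K₀ + 1 with hK
  have hwin : ∀ k : ℕ, K ≤ k → β < ∏ i ∈ Finset.Ioc k (k + 2 ^ N), w i := by
    intro k hk
    have hk1 : 1 ≤ k := by omega
    have hnot : k ∉ {k : ℕ | 1 ≤ k ∧ ∏ j ∈ Finset.Icc (k + 1) (k + 2 ^ N), w j ≤ β} := by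
      intro hmem
      have := hK₀ hmem
      omega
    rw [Set.mem_setOf_eq, not_and] at hnot
    have := hnot hk1
    rw [Finset.Icc_add_one_left_eq_Ioc] at this
    exact lt_of_not_ge this
  -- windows product lower bound
  have hβpos : 0 < β := lt_of_lt_of_le one_pos hβ1
  have windows : ∀ k : ℕ, K ≤ k → ∀ m : ℕ,
      β ^ m ≤ ∏ i ∈ Finset.Ioc k (k + m * 2 ^ N), w i := by
    intro k hk m
    induction m with
    | zero => simp
    | succ m ih =>
      have hsplit : (∏ i ∈ Finset.Ioc k (k + m * 2 ^ N), w i) *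
          ∏ i ∈ Finset.Ioc (k + m * 2 ^ N) (k + (m + 1) * 2 ^ N), w i =
          ∏ i ∈ Finset.Ioc k (k + (m + 1) * 2 ^ N), w i :=
        Finset.prod_Ioc_consecutive w (by omega) (by nlinarith [Nat.one_le_two_pow (n := N)])
      rw [← hsplit, pow_succ]
      apply mul_le_mul ih _ (le_of_lt hβpos) _
      · have := hwin (k + m * 2 ^ N) (by omega)
        calc β ≤ ∏ i ∈ Finset.Ioc (k + m * 2 ^ N) (k + m * 2 ^ N + 2 ^ N), w i := le_of_lt this
          _ = ∏ i ∈ Finset.Ioc (k + m * 2 ^ N) (k + (m + 1) * 2 ^ N), w i := by ring_nf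
      · exact le_trans (le_of_lt (pow_pos hc_pos _)) (block_lb k (k + m * 2 ^ N))
  -- handle β = 1 degenerate case
  rcases eq_or_lt_of_le hβ1 with hβeq | hβgt
  · -- then a ≥ 1 and B ≤ 1, so all weights are 1, and window product = 1 = β
    have hB1 : B ≤ 1 := le_of_max_le_left (le_of_eq hβeq.symm)
    have hainv1 : a⁻¹ ≤ 1 := le_of_max_le_right (le_of_eq hβeq.symm)
    have ha1 : 1 ≤ a := by
      nlinarith [inv_mul_cancel₀ (ne_of_gt ha_pos), inv_pos.mpr ha_pos]
    have hw1 : ∀ i : ℕ, 1 ≤ i → w i = 1 := by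
      intro i hi
      obtain ⟨k, rfl⟩ : ∃ k, i = k + 1 := ⟨i - 1, by omega⟩
      exact le_antisymm (le_trans (le_ciSup hwbdd k) hB1) (le_trans ha1 (ha_le _ hi))
    have hprod1 : ∏ i ∈ Finset.Ioc K (K + 2 ^ N), w i = 1 := by
      apply Finset.prod_eq_one
      intro i hi
      exact hw1 i (by have := (Finset.mem_Ioc.mp hi).1; omega)
    have := hwin K le_rfl
    rw [hprod1, ← hβeq] at this
    exact lt_irrefl 1 this
  · -- main case: β > 1
    set m₀ := K + 2 with hm₀
    have hD : 0 < c ^ m₀ := pow_pos hc_pos _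
    obtain ⟨m, hm⟩ := pow_unbounded_of_one_lt ((c ^ m₀)⁻¹) hβgt
    have hgt1 : 1 < c ^ m₀ * β ^ m := by
      calc (1:ℝ) = c ^ m₀ * (c ^ m₀)⁻¹ := by field_simp
        _ < c ^ m₀ * β ^ m := by
            exact mul_lt_mul_of_pos_left hm hD
    set n := K + 1 + m * 2 ^ N with hn
    have hlow : ∀ k : ℕ, c ^ (K + 1) * β ^ m ≤ ∏ i ∈ Finset.Ioc (k + 1) (k + 1 + n), w i := by
      intro k
      set s := k + 1 with hs
      set t := max s K with ht
      have h1 : s ≤ t := le_max_left _ _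
      have h2 : t + m * 2 ^ N ≤ s + n := by
        rcases le_total s K with h | h
        · simp [ht, max_eq_right h]; omega
        · simp [ht, max_eq_left h]; omega
      have hsplit1 : (∏ i ∈ Finset.Ioc s t, w i) *
          ∏ i ∈ Finset.Ioc t (s + n), w i = ∏ i ∈ Finset.Ioc s (s + n), w i :=
        Finset.prod_Ioc_consecutive w h1 (by omega)
      have hsplit2 : (∏ i ∈ Finset.Ioc t (t + m * 2 ^ N), w i) *
          ∏ i ∈ Finset.Ioc (t + m * 2 ^ N) (s + n), w i = ∏ i ∈ Finset.Ioc t (s + n), w i :=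
        Finset.prod_Ioc_consecutive w (by omega) h2
      rw [← hsplit1, ← hsplit2]
      have hexp : (t - s) + (s + n - (t + m * 2 ^ N)) = K + 1 := by
        rcases le_total s K with h | h
        · simp [ht, max_eq_right h]; omega
        · simp [ht, max_eq_left h]; omega
      have hb1 : c ^ (t - s) ≤ ∏ i ∈ Finset.Ioc s t, w i := block_lb s t
      have hb3 : c ^ (s + n - (t + m * 2 ^ N)) ≤
          ∏ i ∈ Finset.Ioc (t + m * 2 ^ N) (s + n), w i := block_lb _ _
      have hb2 : β ^ m ≤ ∏ i ∈ Finset.Ioc t (t + m * 2 ^ N), w i :=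
        windows t (le_max_right _ _) m
      calc c ^ (K + 1) * β ^ m
          = c ^ (t - s) * (β ^ m * c ^ (s + n - (t + m * 2 ^ N))) := by
            rw [← hexp, pow_add]; ring
        _ ≤ (∏ i ∈ Finset.Ioc s t, w i) *
            ((∏ i ∈ Finset.Ioc t (t + m * 2 ^ N), w i) *
              ∏ i ∈ Finset.Ioc (t + m * 2 ^ N) (s + n), w i) := by
            apply mul_le_mul hb1 _ _ _
            · apply mul_le_mul hb2 hb3 (le_of_lt (pow_pos hc_pos _))
              exact le_trans (le_of_lt (pow_pos hβpos m)) hb2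
            · positivity
            · exact le_trans (le_of_lt (pow_pos hc_pos _)) hb1
        _ = _ := by ring
    -- contradiction with hsupinf
    have hinf_le := hsupinf n (by omega)
    have : c ^ m₀ * β ^ m ≤ ⨅ k : ℕ, ∏ j ∈ Finset.Icc 1 n, w (k + 1 + j) := by
      apply le_ciInf
      intro k
      rw [prod_shift]
      calc c ^ m₀ * β ^ m ≤ c ^ (K + 1) * β ^ m := by
            apply mul_le_mul_of_nonneg_right _ (le_of_lt (pow_pos hβpos m))
            exact pow_le_pow_of_le_one (le_of_lt hc_pos) hc_le1 (by omega)
        _ ≤ _ := hlow k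
    linarith
end

section
/- Let N ∈ ℕ with N ≥ 7, let β > 1, and let w = (ω_k)_{k≥1} be a sequence of positive reals with β^{-1} ≤ ω_j ≤ β for all j. If k' ∈ ℕ satisfies ∏_{j=k'+1}^{k'+2^N} ω_j ≤ β, then there exists k₀ ∈ ℕ with k' ≤ k₀ ≤ k' + 2^N such that max_{k₀ < u ≤ k₀+N} ∏_{j=u}^{k₀+N} ω_j ≤ β. -/
lemma aux_pow (n : ℕ) (hn : 7 ≤ n) : n ^ 2 + n < 2 ^ n := by
  induction n with
  | zero => omega
  | succ k ih =>
    rcases Nat.lt_or_ge k 7 with hk | hk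
    · interval_cases k <;> simp_all
    · have h1 := ih (by omega)
      have h2 : 2 ^ (k + 1) = 2 * 2 ^ k := by ring
      nlinarith

/-- Let `N ≥ 7`, `β > 1`, and let `w = (ω_k)_{k ≥ 1}` be positive
reals with `β⁻¹ ≤ ω_j ≤ β` for all `j ≥ 1`. If `k' ≥ 1` satisfies
`∏_{j=k'+1}^{k'+2^N} ω_j ≤ β`, then there is `k₀` with `k' ≤ k₀ ≤ k' + 2^N` such that
`max_{k₀ < u ≤ k₀+N} ∏_{j=u}^{k₀+N} ω_j ≤ β`. -/
theorem exists_k0_prod_tail_le (N : ℕ) (hN : 7 ≤ N) (β : ℝ) (hβ : 1 < β) (w : ℕ → ℝ)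
    (hw : ∀ j : ℕ, 1 ≤ j → β⁻¹ ≤ w j ∧ w j ≤ β)
    (k' : ℕ) (hk' : 1 ≤ k') (h : ∏ j ∈ Finset.Icc (k' + 1) (k' + 2 ^ N), w j ≤ β) :
    ∃ k₀ : ℕ, k' ≤ k₀ ∧ k₀ ≤ k' + 2 ^ N ∧
      ∀ u : ℕ, k₀ < u → u ≤ k₀ + N → ∏ j ∈ Finset.Icc u (k₀ + N), w j ≤ β := by
  have hβ0 : (0:ℝ) < β := lt_trans one_pos hβ
  set L := Real.log β with hLdef
  have hL : 0 < L := Real.log_pos hβ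
  have hwpos : ∀ j : ℕ, 1 ≤ j → 0 < w j := fun j hj =>
    lt_of_lt_of_le (inv_pos.mpr hβ0) (hw j hj).1
  have hlogub : ∀ j : ℕ, 1 ≤ j → Real.log (w j) ≤ L := by
    intro j hj
    exact Real.log_le_log (hwpos j hj) (hw j hj).2
  have hloglb : ∀ j : ℕ, 1 ≤ j → -L ≤ Real.log (w j) := by
    intro j hj
    have := Real.log_le_log (inv_pos.mpr hβ0) (hw j hj).1
    simpa [Real.log_inv] using this
  set S : ℕ → ℝ := fun m => ∑ j ∈ Finset.Ioc k' m, Real.log (w j) with hS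
  have hSdiff : ∀ a b : ℕ, k' ≤ a → a ≤ b →
      S b - S a = ∑ j ∈ Finset.Ioc a b, Real.log (w j) := by
    intro a b ha hab
    have := Finset.sum_Ioc_consecutive (fun j => Real.log (w j)) ha hab
    simp only [hS]
    linarith [this]
  have hSlb : ∀ a b : ℕ, k' ≤ a → a ≤ b → -((b:ℝ) - a) * L ≤ S b - S a := by
    intro a b ha hab
    rw [hSdiff a b ha hab]
    have : ∀ j ∈ Finset.Ioc a b, -L ≤ Real.log (w j) := by
      intro j hj
      exact hloglb j (le_trans hk' (le_trans ha (Finset.mem_Ioc.mp hj).1.le))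
    calc -((b:ℝ) - a) * L = ∑ _j ∈ Finset.Ioc a b, (-L) := by
          rw [Finset.sum_const, Nat.card_Ioc, nsmul_eq_mul, Nat.cast_sub hab]
          ring
      _ ≤ _ := Finset.sum_le_sum this
  -- hypothesis in log form
  have hprodpos : 0 < ∏ j ∈ Finset.Icc (k' + 1) (k' + 2 ^ N), w j := by
    apply Finset.prod_pos
    intro j hj
    exact hwpos j (by have := (Finset.mem_Icc.mp hj).1; omega)
  have hStop : S (k' + 2 ^ N) ≤ L := by
    have hlog : Real.log (∏ j ∈ Finset.Icc (k' + 1) (k' + 2 ^ N), w j) ≤ L :=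
      Real.log_le_log hprodpos h
    rw [Real.log_prod (fun j hj => ne_of_gt (hwpos j
      (by have := (Finset.mem_Icc.mp hj).1; omega)))] at hlog
    simpa [hS, Finset.Icc_add_one_left_eq_Ioc] using hlog
  -- the tilted function and its minimizer
  set ε : ℝ := L / N with hε
  have hNpos : (0:ℝ) < N := by positivity
  have hεpos : 0 < ε := div_pos hL hNpos
  have hεN : ε * N = L := div_mul_cancel₀ L (ne_of_gt hNpos)
  obtain ⟨m, hmmem, hmin⟩ := Finset.exists_min_image (Finset.Icc k' (k' + 2 ^ N + N))
    (fun m => S m - ε * m) ⟨k', Finset.mem_Icc.mpr ⟨le_rfl, le_trans (Nat.le_add_right k' (2 ^ N)) (Nat.le_add_right _ N)⟩⟩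
  obtain ⟨hmlo, hmhi⟩ := Finset.mem_Icc.mp hmmem
  -- m ≥ k' + N
  have hmge : k' + N ≤ m := by
    by_contra hcon
    push_neg at hcon
    have htopmem : k' + 2 ^ N ∈ Finset.Icc k' (k' + 2 ^ N + N) :=
      Finset.mem_Icc.mpr ⟨Nat.le_add_right _ _, Nat.le_add_right _ _⟩
    have hmin' := hmin _ htopmem
    have hSm : -((m:ℝ) - k') * L ≤ S m := by
      have := hSlb k' m le_rfl hmlo
      have hSk' : S k' = 0 := by simp [hS]
      linarith
    have hd1 : (m:ℝ) - k' ≤ (N:ℝ) - 1 := by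
      have : m + 1 ≤ k' + N := hcon
      have : (m:ℝ) + 1 ≤ k' + N := by exact_mod_cast this
      linarith
    have hd0 : (0:ℝ) ≤ (m:ℝ) - k' := by
      have : (k':ℝ) ≤ m := by exact_mod_cast hmlo
      linarith
    have hpow : (N:ℝ) ^ 2 + N < (2:ℝ) ^ N := by
      have := aux_pow N hN
      exact_mod_cast this
    have hcast : ((k' + 2 ^ N : ℕ) : ℝ) = (k':ℝ) + 2 ^ N := by push_cast; ring
    rw [hcast] at hmin'
    -- derive contradiction
    nlinarith [mul_le_mul_of_nonneg_left hd1 (le_of_lt hεpos),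
      mul_le_mul_of_nonneg_right hd1 (le_of_lt hL),
      mul_nonneg (le_of_lt hεpos) hd0, mul_nonneg (le_of_lt hL) hd0]
  -- define k₀
  refine ⟨m - N, by omega, by omega, ?_⟩
  intro u hu hu'
  have hk₀N : m - N + N = m := by omega
  rw [hk₀N] at hu'
  obtain ⟨v, rfl⟩ : ∃ v, u = v + 1 := ⟨u - 1, by omega⟩
  have hvk' : k' ≤ v := by omega
  have hvm : v ≤ m := by omega
  have hvmem : v ∈ Finset.Icc k' (k' + 2 ^ N + N) := by simp; omega
  have hminv := hmin v hvmem
  have hkey : S m - S v ≤ L := by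
    have hmv : (m:ℝ) - v ≤ N := by
      have : m ≤ v + N := by omega
      have : (m:ℝ) ≤ v + N := by exact_mod_cast this
      linarith
    have h1 : S m - S v ≤ ε * m - ε * v := by linarith
    have h2 : ε * m - ε * v = ε * ((m:ℝ) - v) := by ring
    calc S m - S v ≤ ε * ((m:ℝ) - v) := by linarith [h1, h2.le]
      _ ≤ ε * N := by nlinarith
      _ = L := hεN
  have hprod : ∏ j ∈ Finset.Icc (v + 1) (m - N + N), w j
      = Real.exp (S m - S v) := by
    rw [hk₀N, Finset.Icc_add_one_left_eq_Ioc, hSdiff v m hvk' hvm, Real.exp_sum]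
    apply Finset.prod_congr rfl
    intro j hj
    rw [Real.exp_log (hwpos j (by have := (Finset.mem_Ioc.mp hj).1; omega))]
  rw [hprod]
  calc Real.exp (S m - S v) ≤ Real.exp L := Real.exp_le_exp.mpr hkey
    _ = β := Real.exp_log hβ0
end
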